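/- arXiv:1709.04345 — 11 statements merged into one kernel-verified Lean document; each statement's English description precedes it below -/
import Mathlib

section
/- Let α > 0 and let I ⊆ ℝ be an open interval. If F is an indefinite MC^α integral of f on I and G is an indefinite MC^α integral of g on I, and a, b ∈ ℝ, then aF + bG is an indefinite MC^α integral of af + bg on I. -/
open Filter Set Topology MeasureTheory

/-- `φ` is an `α`-control function for the pair `(F, f)` on the interval `I`:
`φ` is strictly increasing on `I` and for every `x ∈ I`,
`(F y - F x - f x (y - x)) / (φ (x + α (y - x)) - φ x) → 0` as `y → x` within `I \ {x}`. -/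
def IsControlFn (α : ℝ) (I : Set ℝ) (F f φ : ℝ → ℝ) : Prop :=
  StrictMonoOn φ I ∧ ∀ x ∈ I,
    Tendsto (fun y => (F y - F x - f x * (y - x)) / (φ (x + α * (y - x)) - φ x))
      (𝓝[I \ {x}] x) (𝓝 0)

/-- `F` is an indefinite `MC^α` integral of `f` on `I`. -/
def IsMCIntegral (α : ℝ) (I : Set ℝ) (F f : ℝ → ℝ) : Prop :=
  ∃ φ : ℝ → ℝ, IsControlFn α I F f φ

/-! The sum `φ + ψ` of control functions for `(F, f)` and `(G, g)` controls `(aF + bG, af + bg)`: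
since `φ` and `ψ` are both strictly increasing, their increments from `x` have the same sign, so
`|t + s| ≥ max |t| |s|` and the quotient for the combination is bounded by `|a|` and `|b|` times
the two given quotients. -/

lemma abs_add_div_add_le_of_mul_pos {A B t s : ℝ} (hts : 0 < t * s) :
    |(A + B) / (t + s)| ≤ |A / t| + |B / s| := by
  have ht : 0 < |t| := abs_pos.2 (left_ne_zero_of_mul hts.ne')
  have hs : 0 < |s| := abs_pos.2 (right_ne_zero_of_mul hts.ne')
  have hsum : |t + s| = |t| + |s| := abs_add_eq_add_abs_iff t s |>.2 <| by
    rcases (mul_pos_iff.1 hts) with ⟨h₁, h₂⟩ | ⟨h₁, h₂⟩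
    · exact .inl ⟨h₁.le, h₂.le⟩
    · exact .inr ⟨h₁.le, h₂.le⟩
  rw [abs_div, abs_div, abs_div, hsum]
  calc |A + B| / (|t| + |s|) ≤ |A| / (|t| + |s|) + |B| / (|t| + |s|) := by
        rw [← add_div]; gcongr; exact abs_add_le A B
    _ ≤ |A| / |t| + |B| / |s| := by gcongr <;> linarith

lemma StrictMonoOn.mul_sub_pos {I : Set ℝ} {φ ψ : ℝ → ℝ} (hφ : StrictMonoOn φ I)
    (hψ : StrictMonoOn ψ I) {x z : ℝ} (hx : x ∈ I) (hz : z ∈ I) (hzx : z ≠ x) :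
    0 < (φ z - φ x) * (ψ z - ψ x) := by
  rcases hzx.lt_or_gt with h | h
  · exact mul_pos_of_neg_of_neg (sub_neg.2 (hφ hz hx h)) (sub_neg.2 (hψ hz hx h))
  · exact mul_pos (sub_pos.2 (hφ hx hz h)) (sub_pos.2 (hψ hx hz h))

lemma abs_control_quotient_add_le {I : Set ℝ} {φ ψ : ℝ → ℝ} (hφ : StrictMonoOn φ I)
    (hψ : StrictMonoOn ψ I) {x z : ℝ} (hx : x ∈ I) (hz : z ∈ I) (a b A B : ℝ) :
    |(a * A + b * B) / ((φ + ψ) z - (φ + ψ) x)|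
      ≤ |a| * |A / (φ z - φ x)| + |b| * |B / (ψ z - ψ x)| := by
  rcases eq_or_ne z x with rfl | hzx
  · -- every quotient is a division by `0`, hence `0`
    simp only [sub_self, div_zero, abs_zero]
    positivity
  · have hquot : (φ + ψ) z - (φ + ψ) x = (φ z - φ x) + (ψ z - ψ x) := by
      simp only [Pi.add_apply]; ring
    rw [hquot, ← abs_mul, ← abs_mul, mul_div_assoc', mul_div_assoc']
    exact abs_add_div_add_le_of_mul_pos (hφ.mul_sub_pos hψ hx hz hzx)

lemma IsOpen.eventually_mem_affine {I : Set ℝ} (hI : IsOpen I) {x : ℝ} (hx : x ∈ I) (α : ℝ) :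
    ∀ᶠ y in 𝓝 x, x + α * (y - x) ∈ I := by
  have hcont : Tendsto (fun y : ℝ => x + α * (y - x)) (𝓝 x) (𝓝 x) := by
    have h := (((continuous_id.sub (continuous_const (y := x))).const_mul α).const_add x).tendsto x
    simpa using h
  exact hcont.eventually (hI.eventually_mem hx)

lemma IsControlFn.const_mul_add_const_mul {α : ℝ} {I : Set ℝ} (hI : IsOpen I)
    {F G f g φ ψ : ℝ → ℝ} (hF : IsControlFn α I F f φ) (hG : IsControlFn α I G g ψ) (a b : ℝ) :
    IsControlFn α I (fun x => a * F x + b * G x) (fun x => a * f x + b * g x) (φ + ψ) := by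
  obtain ⟨hφ, hFlim⟩ := hF
  obtain ⟨hψ, hGlim⟩ := hG
  refine ⟨hφ.add hψ, fun x hx => ?_⟩
  have hbound : Tendsto (fun y => |a| * |(F y - F x - f x * (y - x)) / (φ (x + α * (y - x)) - φ x)|
      + |b| * |(G y - G x - g x * (y - x)) / (ψ (x + α * (y - x)) - ψ x)|)
      (𝓝[I \ {x}] x) (𝓝 0) := by
    simpa using ((hFlim x hx).abs.const_mul |a|).add ((hGlim x hx).abs.const_mul |b|)
  refine squeeze_zero_norm' ?_ hbound
  filter_upwards [nhdsWithin_le_nhds (hI.eventually_mem_affine hx α)] with y hz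
  have hnum : a * F y + b * G y - (a * F x + b * G x) - (a * f x + b * g x) * (y - x)
      = a * (F y - F x - f x * (y - x)) + b * (G y - G x - g x * (y - x)) := by ring
  rw [Real.norm_eq_abs, hnum]
  exact abs_control_quotient_add_le hφ hψ hx hz a b _ _

theorem stmt_0_general (α : ℝ) (I : Set ℝ) (hIopen : IsOpen I)
    (F G f g : ℝ → ℝ) (a b : ℝ)
    (hF : IsMCIntegral α I F f) (hG : IsMCIntegral α I G g) :
    IsMCIntegral α I (fun x => a * F x + b * G x) (fun x => a * f x + b * g x) := by
  obtain ⟨φ, hφ⟩ := hF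
  obtain ⟨ψ, hψ⟩ := hG
  exact ⟨φ + ψ, hφ.const_mul_add_const_mul hIopen hψ a b⟩

/-- Linearity of the `MC^α` integral. -/
theorem stmt_0 (α : ℝ) (hα : 0 < α) (I : Set ℝ) (hIopen : IsOpen I)
    (hIconn : I.OrdConnected) (F G f g : ℝ → ℝ) (a b : ℝ)
    (hF : IsMCIntegral α I F f) (hG : IsMCIntegral α I G g) :
    IsMCIntegral α I (fun x => a * F x + b * G x) (fun x => a * f x + b * g x) :=
  stmt_0_general α I hIopen F G f g a b hF hG
end

section
/- Let α > 0 and let (a,b) ⊆ ℝ be an open interval. If F is an indefinite MC^α integral of f on (a,b), then F is continuous on (a,b). -/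
open Filter Set Topology MeasureTheory

/-- An indefinite `MC^α` integral is continuous. -/
theorem stmt_1 (α : ℝ) (hα : 0 < α) (a b : ℝ) (F f : ℝ → ℝ)
    (hF : IsMCIntegral α (Set.Ioo a b) F f) :
    ContinuousOn F (Set.Ioo a b) := by
  obtain ⟨φ, hmono, htend⟩ := hF
  intro x hx
  rw [← continuousWithinAt_diff_self]
  set l := 𝓝[Set.Ioo a b \ {x}] x with hl
  obtain ⟨hax, hxb⟩ := hx
  set c := (a + x) / 2 with hcdef
  set d := (x + b) / 2 with hddef
  have hc : c ∈ Set.Ioo a b := ⟨by rw [hcdef]; linarith, by rw [hcdef]; linarith⟩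
  have hd : d ∈ Set.Ioo a b := ⟨by rw [hddef]; linarith, by rw [hddef]; linarith⟩
  have hcx : c < x := by rw [hcdef]; linarith
  have hxd : x < d := by rw [hddef]; linarith
  set ε := min ((x - c) / α) ((d - x) / α) with hεdef
  have hε : 0 < ε := lt_min (div_pos (by linarith) hα) (div_pos (by linarith) hα)
  have hαε1 : α * ε ≤ x - c := by
    have h := min_le_left ((x - c) / α) ((d - x) / α)
    rw [← hεdef] at h
    calc α * ε ≤ α * ((x - c) / α) := by nlinarith
    _ = x - c := by field_simp
  have hαε2 : α * ε ≤ d - x := by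
    have h := min_le_right ((x - c) / α) ((d - x) / α)
    rw [← hεdef] at h
    calc α * ε ≤ α * ((d - x) / α) := by nlinarith
    _ = d - x := by field_simp
  have key : ∀ᶠ y in l, y ≠ x ∧ x + α * (y - x) ∈ Set.Ioo a b ∧
      c ≤ x + α * (y - x) ∧ x + α * (y - x) ≤ d := by
    have h1 : ∀ᶠ y in l, y ∈ Set.Ioo a b \ {x} := self_mem_nhdsWithin
    have h2 : ∀ᶠ y : ℝ in 𝓝 x, |y - x| < ε := by
      filter_upwards [Metric.ball_mem_nhds x hε] with y hy
      simpa [Real.dist_eq] using hy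
    have h2' : ∀ᶠ y in l, |y - x| < ε := h2.filter_mono nhdsWithin_le_nhds
    filter_upwards [h1, h2'] with y hy hy2
    obtain ⟨hy1, hyne⟩ := hy
    obtain ⟨hlo, hhi⟩ := abs_lt.mp hy2
    have hge : c ≤ x + α * (y - x) := by nlinarith
    have hle : x + α * (y - x) ≤ d := by nlinarith
    exact ⟨hyne, ⟨lt_of_lt_of_le hc.1 hge, lt_of_le_of_lt hle hd.2⟩, hge, hle⟩
  have hnum : Tendsto (fun y => F y - F x - f x * (y - x)) l (𝓝 0) := by
    have h1 := htend x ⟨hax, hxb⟩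
    have hb : IsBoundedUnder (· ≤ ·) l
        (fun y => ‖φ (x + α * (y - x)) - φ x‖) := by
      refine isBoundedUnder_of_eventually_le (a := φ d - φ c) ?_
      filter_upwards [key] with y hy
      obtain ⟨_, hzI, hzc, hzd⟩ := hy
      have h4 : φ c ≤ φ (x + α * (y - x)) := hmono.monotoneOn hc hzI hzc
      have h5 : φ (x + α * (y - x)) ≤ φ d := hmono.monotoneOn hzI hd hzd
      have h6 : φ c ≤ φ x := hmono.monotoneOn hc ⟨hax, hxb⟩ hcx.le
      have h7 : φ x ≤ φ d := hmono.monotoneOn ⟨hax, hxb⟩ hd hxd.le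
      rw [Real.norm_eq_abs, abs_le]
      constructor <;> linarith
    have hmul := h1.zero_mul_isBoundedUnder_le hb
    refine hmul.congr' ?_
    filter_upwards [key] with y hy
    obtain ⟨hyne, hzI, _, _⟩ := hy
    have hzx : x + α * (y - x) ≠ x := by
      intro h
      have : α * (y - x) = 0 := by linarith
      rcases mul_eq_zero.mp this with h' | h'
      · exact absurd h' hα.ne'
      · exact hyne (by linarith)
    have hden : φ (x + α * (y - x)) - φ x ≠ 0 := by
      rcases lt_or_gt_of_ne hzx with h | h
      · exact sub_ne_zero.mpr (ne_of_lt (hmono hzI ⟨hax, hxb⟩ h))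
      · exact sub_ne_zero.mpr (ne_of_gt (hmono ⟨hax, hxb⟩ hzI h))
    exact (div_mul_cancel₀ _ hden).symm ▸ rfl
  have h2 : Tendsto (fun y => f x * (y - x)) l (𝓝 0) := by
    have hsub : Tendsto (fun y : ℝ => y - x) l (𝓝 0) := by
      have h := (continuous_sub_right x).tendsto x
      rw [sub_self] at h
      exact h.mono_left nhdsWithin_le_nhds
    simpa using hsub.const_mul (f x)
  have h3 := (hnum.add h2).add_const (F x)
  simp only [zero_add, add_zero] at h3
  refine h3.congr ?_
  intro y
  ring
end

section
/- Let 0 < α ≤ β and let (a,b) ⊆ ℝ be an open interval. If F is an indefinite MC^α integral of f on (a,b), then F is an indefinite MC^β integral of f on (a,b). -/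
open Filter Set Topology MeasureTheory

/-- `MC^α` integrability implies `MC^β` integrability for `β ≥ α`. -/
theorem stmt_2 (α β : ℝ) (hα : 0 < α) (hαβ : α ≤ β) (a b : ℝ) (F f : ℝ → ℝ)
    (hF : IsMCIntegral α (Set.Ioo a b) F f) :
    IsMCIntegral β (Set.Ioo a b) F f := by
  obtain ⟨φ, hmono, hlim⟩ := hF
  refine ⟨φ, hmono, fun x hx => ?_⟩
  have hβ : 0 < β := hα.trans_le hαβ
  have hx' := hlim x hx
  rw [tendsto_zero_iff_norm_tendsto_zero] at hx' ⊢
  have hδ : 0 < min (x - a) (b - x) := by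
    simp [sub_pos, hx.1, hx.2]
  have hball : ∀ᶠ y in 𝓝[Set.Ioo a b \ {x}] x,
      |y - x| < min (x - a) (b - x) / β := by
    apply eventually_nhdsWithin_of_eventually_nhds
    have := Metric.ball_mem_nhds x (div_pos hδ hβ)
    filter_upwards [this] with y hy
    simpa [Real.dist_eq] using hy
  have hmem : ∀ᶠ y in 𝓝[Set.Ioo a b \ {x}] x, y ∈ Set.Ioo a b \ {x} :=
    eventually_mem_nhdsWithin
  refine squeeze_zero' (Eventually.of_forall fun y => norm_nonneg _) ?_ hx'
  filter_upwards [hmem, hball] with y hy hdist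
  set t := y - x with ht
  have htne : t ≠ 0 := sub_ne_zero.mpr hy.2
  have hβt : |β * t| < min (x - a) (b - x) := by
    rw [abs_mul, abs_of_pos hβ]
    calc β * |t| < β * (min (x - a) (b - x) / β) := by
          exact mul_lt_mul_of_pos_left hdist hβ
      _ = min (x - a) (b - x) := by field_simp
  have hαt : |α * t| ≤ |β * t| := by
    rw [abs_mul, abs_mul, abs_of_pos hα, abs_of_pos hβ]
    exact mul_le_mul_of_nonneg_right hαβ (abs_nonneg t)
  have hmemβ : x + β * t ∈ Set.Ioo a b := by
    constructor
    · have : -(x - a) < β * t := neg_lt_of_abs_lt (hβt.trans_le (min_le_left _ _))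
      linarith
    · have : β * t < b - x := lt_of_abs_lt (hβt.trans_le (min_le_right _ _))
      linarith
  have hmemα : x + α * t ∈ Set.Ioo a b := by
    constructor
    · have : -(x - a) < α * t :=
        neg_lt_of_abs_lt ((hαt.trans_lt hβt).trans_le (min_le_left _ _))
      linarith
    · have : α * t < b - x :=
        lt_of_abs_lt ((hαt.trans_lt hβt).trans_le (min_le_right _ _))
      linarith
  -- denominator comparison
  have hkey : 0 < |φ (x + α * t) - φ x| ∧
      |φ (x + α * t) - φ x| ≤ |φ (x + β * t) - φ x| := by
    rcases htne.lt_or_gt with h | h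
    · -- t < 0
      have h1 : x + β * t ≤ x + α * t := by nlinarith
      have h2 : x + α * t < x := by nlinarith
      have hφ1 : φ (x + α * t) < φ x := hmono hmemα hx h2
      have hφ2 : φ (x + β * t) ≤ φ (x + α * t) := hmono.monotoneOn hmemβ hmemα h1
      rw [abs_of_neg (by linarith), abs_of_neg (by linarith)]
      constructor <;> linarith
    · -- t > 0
      have h1 : x + α * t ≤ x + β * t := by nlinarith
      have h2 : x < x + α * t := by nlinarith
      have hφ1 : φ x < φ (x + α * t) := hmono hx hmemα h2
      have hφ2 : φ (x + α * t) ≤ φ (x + β * t) := hmono.monotoneOn hmemα hmemβ h1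
      rw [abs_of_pos (by linarith), abs_of_pos (by linarith)]
      constructor <;> linarith
  rw [Real.norm_eq_abs, Real.norm_eq_abs, abs_div, abs_div]
  exact div_le_div_of_nonneg_left (abs_nonneg _) hkey.1 hkey.2
end

section
/- Let α > 0 and let (a,b) ⊆ ℝ be an open interval. If F is an indefinite MC^α integral of f on (a,b), then F is differentiable at x with F′(x) = f(x) for (Lebesgue) almost every x ∈ (a,b). -/
/-!
The control function `φ` is strictly increasing, so by Lebesgue's theorem it is differentiable
at almost every `x`. At such a point the denominator `φ (x + α (y - x)) - φ x` is `O(y - x)`,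
so the remainder `F y - F x - f x (y - x)`, being `o` of that denominator, is `o(y - x)`:
this is exactly `F' x = f x`.
-/

open Filter Set Topology MeasureTheory

open Asymptotics

theorem HasDerivAt.of_tendsto_div_sub {F g : ℝ → ℝ} {x c g' : ℝ} (hg : HasDerivAt g g' x)
    (hne : ∀ᶠ y in 𝓝[≠] x, g y ≠ g x)
    (h : Tendsto (fun y => (F y - F x - c * (y - x)) / (g y - g x)) (𝓝[≠] x) (𝓝 0)) :
    HasDerivAt F c x := by
  have hlo : (fun y => F y - F x - c * (y - x)) =o[𝓝[≠] x] fun y => g y - g x :=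
    (isLittleO_iff_tendsto' (hne.mono fun y hy h0 => absurd (sub_eq_zero.mp h0) hy)).mpr h
  have hlo' : (fun y => F y - F x - c * (y - x)) =o[𝓝 x] fun y => g y - g x := by
    simpa using hlo.insert (by simp)
  rw [hasDerivAt_iff_isLittleO]
  simpa only [smul_eq_mul, mul_comm] using hlo'.trans_isBigO hg.isBigO_sub

theorem Set.InjOn.eventually_ne_comp_affine {φ : ℝ → ℝ} {s : Set ℝ} {x α : ℝ} (hφ : InjOn φ s)
    (hs : s ∈ 𝓝 x) (hα : α ≠ 0) : ∀ᶠ y in 𝓝[≠] x, φ (x + α * (y - x)) ≠ φ x := by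
  have hmaps : ∀ᶠ y in 𝓝 x, x + α * (y - x) ∈ s := by
    have hc : ContinuousAt (fun y : ℝ => x + α * (y - x)) x := by fun_prop
    exact hc (by simpa using hs)
  filter_upwards [nhdsWithin_le_nhds hmaps, self_mem_nhdsWithin] with y hy (hyx : y ≠ x) heq
  have hfix : x + α * (y - x) = x := hφ hy (mem_of_mem_nhds hs) heq
  exact hyx (by simpa [hα, sub_eq_zero] using hfix)

theorem IsControlFn.hasDerivAt {α : ℝ} {I : Set ℝ} {F f φ : ℝ → ℝ} (hφ : IsControlFn α I F f φ)
    (hα : α ≠ 0) {x : ℝ} (hI : I ∈ 𝓝 x) (hφx : DifferentiableAt ℝ φ x) :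
    HasDerivAt F (f x) x := by
  have hxI : x ∈ I := mem_of_mem_nhds hI
  have hg : HasDerivAt (fun y => φ (x + α * (y - x))) (deriv φ x * α) x := by
    have haff : HasDerivAt (fun y : ℝ => x + α * (y - x)) α x := by
      simpa using (((hasDerivAt_id x).sub_const x).const_mul α).const_add x
    exact HasDerivAt.comp x (by simpa using hφx.hasDerivAt) haff
  have hfilter : 𝓝[I \ {x}] x = 𝓝[≠] x := by
    rw [sdiff_eq]
    exact nhdsWithin_inter_of_mem (mem_nhdsWithin_of_mem_nhds hI)
  refine hg.of_tendsto_div_sub ?_ ?_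
  · simpa using hφ.1.injOn.eventually_ne_comp_affine hI hα
  · simpa [← hfilter] using hφ.2 x hxI

/-- An indefinite `MC^α` integral `F` of `f` satisfies `F' = f` almost everywhere. -/
theorem stmt_3 (α : ℝ) (hα : 0 < α) (a b : ℝ) (F f : ℝ → ℝ)
    (hF : IsMCIntegral α (Set.Ioo a b) F f) :
    ∀ᵐ x ∂(volume.restrict (Set.Ioo a b)), HasDerivAt F (f x) x := by
  obtain ⟨φ, hφ⟩ := hF
  filter_upwards [hφ.1.monotoneOn.ae_differentiableWithinAt measurableSet_Ioo,
    ae_restrict_mem measurableSet_Ioo] with x hφx hx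
  have hI : Ioo a b ∈ 𝓝 x := isOpen_Ioo.mem_nhds hx
  exact hφ.hasDerivAt hα.ne' hI (hφx.differentiableAt hI)
end

section
/- Suppose F : (a,b) → ℝ satisfies: (1) limsup_{y ↗ x} F(y) ≤ F(x) ≤ limsup_{y ↘ x} F(y) for every x ∈ (a,b); and (2) there exist a strictly increasing function φ : (a,b) → ℝ and a real number α > 0 such that for every x ∈ (a,b) except at most countably many, liminf_{h ↘ 0} (F(x+h) − F(x)) / (φ(x + α h) − φ(x)) ≥ 0. Then F is increasing (monotone nondecreasing) on (a,b). -/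
/-!
Fix `x < y` in `(a, b)`, enumerate the exceptional set as `s 0, s 1, …`, and let `ψ` be the
increasing function that jumps by `2⁻ⁿ` just after `s n`. For the gauge `G = φ + ψ + id` and
`ε > 0`, the supremum `c` of the `z ∈ [x, y]` with `F x + ε G x ≤ F z + ε G z` again has this
property, by the left condition on `F` and monotonicity of `G`. It cannot lie below `y`: if
`c = s n`, the jump of `ψ` absorbs the defect allowed by the right-hand `limsup`; otherwise the
derivate condition at `c` applies at the arbitrarily small scales `h` where
`φ (c + α h) - φ c ≤ (α + 1) (φ (c + h) - φ c + h)`, which exist because `φ` is increasing.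
Letting `ε → 0` gives `F x ≤ F y`.
-/

open Filter Set Topology

noncomputable def geomJump (s : ℕ → ℝ) (t : ℝ) : ℝ :=
  ∑' n, {n | s n < t}.indicator (fun n => (1 / 2 : ℝ) ^ n) n

theorem summable_geomJump (s : ℕ → ℝ) (t : ℝ) :
    Summable fun n => {n | s n < t}.indicator (fun n => (1 / 2 : ℝ) ^ n) n :=
  summable_geometric_two.indicator _

theorem indicator_geomJump_mono (s : ℕ → ℝ) {u v : ℝ} (huv : u ≤ v) :
    {n | s n < u}.indicator (fun n => (1 / 2 : ℝ) ^ n) ≤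
      {n | s n < v}.indicator (fun n => (1 / 2 : ℝ) ^ n) :=
  indicator_le_indicator_of_subset (fun _ hn => lt_of_lt_of_le hn huv) fun n => by positivity

theorem monotone_geomJump (s : ℕ → ℝ) : Monotone (geomJump s) := fun _ _ huv =>
  (summable_geomJump s _).tsum_le_tsum (indicator_geomJump_mono s huv) (summable_geomJump s _)

theorem geomJump_add_le (s : ℕ → ℝ) (n : ℕ) {z : ℝ} (hz : s n < z) :
    geomJump s (s n) + (1 / 2) ^ n ≤ geomJump s z := by
  have hsum := (summable_geomJump s z).hasSum.sub (summable_geomJump s (s n)).hasSum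
  have := le_hasSum hsum n fun m _ => sub_nonneg.2 (indicator_geomJump_mono s hz.le m)
  rw [indicator_of_mem (show n ∈ {m | s m < z} from hz),
    indicator_of_notMem (show n ∉ {m | s m < s n} from (lt_irrefl (s n))), sub_zero] at this
  unfold geomJump
  linarith

theorem MonotoneOn.frequently_sub_le_add_one_mul {φ : ℝ → ℝ} {c b α : ℝ} (hcb : c < b)
    (hφ : MonotoneOn φ (Ico c b)) (hα : 0 < α) :
    ∃ᶠ h in 𝓝[>] 0, φ (c + α * h) - φ c ≤ (α + 1) * (φ (c + h) - φ c + h) := by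
  have hmem : ∀ {t}, t ∈ Ioo 0 (b - c) → c + t ∈ Ico c b := fun ht =>
    ⟨by linarith [ht.1], by linarith [ht.2]⟩
  have hinc : ∀ {t}, t ∈ Ioo 0 (b - c) → φ c ≤ φ (c + t) := fun ht =>
    hφ (left_mem_Ico.2 hcb) (hmem ht) (by linarith [ht.1])
  rcases le_or_gt α 1 with hα1 | hα1
  · refine (eventually_mem_nhdsWithin.and (Ioo_mem_nhdsGT (sub_pos.2 hcb))).frequently.mono ?_
    rintro h ⟨-, hhb⟩
    have hαh : φ (c + α * h) ≤ φ (c + h) :=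
      hφ (hmem ⟨mul_pos hα hhb.1, by nlinarith [hhb.2]⟩) (hmem hhb) (by nlinarith [hhb.1])
    nlinarith [hinc hhb]
  by_contra hcon
  obtain ⟨δ, hδ : 0 < δ, hδsub⟩ := mem_nhdsGT_iff_exists_Ioo_subset.1
    ((not_frequently.1 hcon).and (Ioo_mem_nhdsGT (sub_pos.2 hcb)))
  -- Were the inequality false on `(0, δ)`, the slope `(φ (c + t) - φ c) / t` would grow by at
  -- least one each time `t` is multiplied by `α`.
  have hgrow : ∀ n : ℕ, ∀ t ∈ Ioo 0 δ, n * t ≤ φ (c + t) - φ c := by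
    intro n
    induction n with
    | zero => intro t ht; simpa using hinc (hδsub ht).2
    | succ n ih =>
      intro t ht
      have ht' : t / α ∈ Ioo 0 δ := ⟨by have := ht.1; positivity,
        (div_lt_self ht.1 hα1).trans ht.2⟩
      have hfail := (hδsub ht').1
      rw [mul_div_cancel₀ t hα.ne'] at hfail
      have hslope := ih _ ht'
      have hnt : 0 ≤ n * (t / α) := by have := ht'.1; positivity
      push_cast
      calc (n + 1) * t = α * (n * (t / α)) + α * (t / α) := by field_simp
        _ ≤ α * (φ (c + t / α) - φ c) + α * (t / α) := by gcongr
        _ ≤ (α + 1) * (φ (c + t / α) - φ c + t / α) := by nlinarith [ht'.1]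
        _ ≤ φ (c + t) - φ c := (not_le.1 hfail).le
  obtain ⟨n, hn⟩ := exists_nat_gt ((φ (c + δ / 2) - φ c) / (δ / 2))
  have := hgrow n (δ / 2) ⟨by positivity, by linarith⟩
  rw [div_lt_iff₀ (by positivity)] at hn
  linarith

theorem prop_of_frequently_nhdsLT_of_frequently_nhdsGT {X : Type*}
    [ConditionallyCompleteLinearOrder X] [TopologicalSpace X] [OrderTopology X]
    {P : X → Prop} {x y : X}
    (hxy : x ≤ y) (hx : P x) (hleft : ∀ c ∈ Ioc x y, (∃ᶠ z in 𝓝[<] c, P z) → P c)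
    (hright : ∀ c ∈ Ico x y, P c → ∃ᶠ z in 𝓝[>] c, P z) : P y := by
  set A := {z ∈ Icc x y | P z}
  have hxA : x ∈ A := ⟨⟨le_rfl, hxy⟩, hx⟩
  have hAbdd : BddAbove A := ⟨y, fun z hz => hz.1.2⟩
  have hlub : IsLUB A (sSup A) := isLUB_csSup ⟨x, hxA⟩ hAbdd
  set c := sSup A
  have hxc : x ≤ c := hlub.1 hxA
  have hcy : c ≤ y := hlub.2 fun z hz => hz.1.2
  have hPc : P c := by
    by_cases hcA : c ∈ A
    · exact hcA.2
    rcases hxc.eq_or_lt with hxc | hxc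
    · exact hxc ▸ hx
    refine hleft c ⟨hxc, hcy⟩ (frequently_nhdsWithin_iff.2 ?_)
    refine (frequently_nhdsWithin_iff.1 (hlub.frequently_mem ⟨x, hxA⟩)).mono ?_
    rintro z ⟨hzA, hzc⟩
    exact ⟨hzA.2, lt_of_le_of_ne hzc fun h : z = c => hcA (h ▸ hzA)⟩
  by_contra hPy
  have hcy' : c < y := lt_of_le_of_ne hcy fun h => hPy (h ▸ hPc)
  obtain ⟨z, hz, hcz, hzy⟩ :=
    ((hright c ⟨hxc, hcy'⟩ hPc).and_eventually (Ioc_mem_nhdsGT hcy')).exists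
  exact (hlub.1 ⟨⟨hxc.trans hcz.le, hzy⟩, hz⟩).not_gt hcz

theorem le_of_limsup_nhdsLT_le_of_frequently_nhdsGT {X : Type*}
    [ConditionallyCompleteLinearOrder X] [TopologicalSpace X] [OrderTopology X]
    {F G : X → ℝ} {x y : X} (hxy : x ≤ y)
    (hG : MonotoneOn G (Icc x y))
    (hleft : ∀ c ∈ Ioc x y, limsup (fun z => (F z : EReal)) (𝓝[<] c) ≤ F c)
    (hright : ∀ c ∈ Ico x y, ∀ ε > 0, ∃ᶠ z in 𝓝[>] c, F c + ε * G c ≤ F z + ε * G z) :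
    F x ≤ F y := by
  have hgauge : ∀ ε > 0, F x + ε * G x ≤ F y + ε * G y := by
    intro ε hε
    refine prop_of_frequently_nhdsLT_of_frequently_nhdsGT
      (P := fun z => F x + ε * G x ≤ F z + ε * G z) hxy le_rfl (fun c hc hfreq => ?_)
      fun c hc hPc => (hright c hc ε hε).mono fun z hz => hPc.trans hz
    have hfreq' : ∃ᶠ z in 𝓝[<] c, ((F x + ε * G x - ε * G c : ℝ) : EReal) ≤ F z := by
      refine (hfreq.and_eventually (Ioo_mem_nhdsLT hc.1)).mono ?_
      rintro z ⟨hz, hxz, hzc⟩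
      have := mul_le_mul_of_nonneg_left
        (hG ⟨hxz.le, hzc.le.trans hc.2⟩ ⟨hc.1.le, hc.2⟩ hzc.le) hε.le
      exact EReal.coe_le_coe_iff.2 (by linarith)
    have := EReal.coe_le_coe_iff.1 ((le_limsup_of_frequently_le hfreq').trans (hleft c hc))
    linarith
  have hlim : Tendsto (fun ε => F y + ε * (G y - G x)) (𝓝[>] 0) (𝓝 (F y)) := by
    have : Continuous fun ε : ℝ => F y + ε * (G y - G x) := by fun_prop
    simpa using (this.tendsto 0).mono_left nhdsWithin_le_nhds
  exact ge_of_tendsto hlim (eventually_nhdsWithin_of_forall fun ε hε => by linarith [hgauge ε hε])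

theorem frequently_add_mul_le_of_le_limsup {X : Type*} {l : Filter X} {F G : X → ℝ} {c : X}
    {δ ε : ℝ} (hF : (F c : EReal) ≤ limsup (fun z => (F z : EReal)) l) (hδ : 0 < δ) (hε : 0 < ε)
    (hG : ∀ᶠ z in l, G c + δ ≤ G z) :
    ∃ᶠ z in l, F c + ε * G c ≤ F z + ε * G z := by
  have hlt : ((F c - ε * δ : ℝ) : EReal) < limsup (fun z => (F z : EReal)) l :=
    (EReal.coe_lt_coe_iff.2 (by nlinarith)).trans_le hF
  refine ((frequently_lt_of_lt_limsup (by isBoundedDefault) hlt).and_eventually hG).mono ?_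
  rintro z ⟨hFz, hGz⟩
  have := EReal.coe_lt_coe_iff.1 hFz
  nlinarith

theorem frequently_sub_le_of_liminf_nonneg {F φ : ℝ → ℝ} {c b α ε : ℝ} (hcb : c < b)
    (hφ : StrictMonoOn φ (Ico c b)) (hα : 0 < α) (hε : 0 < ε)
    (hd : 0 ≤ liminf (fun h => (((F (c + h) - F c) / (φ (c + α * h) - φ c) : ℝ) : EReal))
      (𝓝[>] 0)) :
    ∃ᶠ z in 𝓝[>] c, F c - ε * (φ z - φ c + (z - c)) ≤ F z := by
  have hη : 0 < ε / (α + 1) := by positivity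
  have hratio : ∀ᶠ h in 𝓝[>] 0, -(ε / (α + 1)) < (F (c + h) - F c) / (φ (c + α * h) - φ c) :=
    (eventually_lt_of_lt_liminf ((EReal.coe_lt_coe_iff.2 (neg_neg_of_pos hη)).trans_le hd)).mono
      fun h hh => EReal.coe_lt_coe_iff.1 hh
  have hpos : ∀ᶠ h in 𝓝[>] 0, 0 < φ (c + α * h) - φ c := by
    refine eventually_of_mem (Ioo_mem_nhdsGT (div_pos (sub_pos.2 hcb) hα)) fun h hh => ?_
    have hαh := (lt_div_iff₀' hα).1 hh.2
    exact sub_pos.2 (hφ (left_mem_Ico.2 hcb) ⟨by nlinarith [hh.1], by linarith⟩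
      (by nlinarith [hh.1]))
  have hmap : map (c + ·) (𝓝[>] 0) = 𝓝[>] c := by simp
  rw [← hmap, frequently_map]
  refine ((hφ.monotoneOn.frequently_sub_le_add_one_mul hcb hα).and_eventually
    (hratio.and hpos)).mono ?_
  rintro h ⟨hle, hr, hD⟩
  rw [lt_div_iff₀ hD] at hr
  have : ε / (α + 1) * (φ (c + α * h) - φ c) ≤ ε * (φ (c + h) - φ c + h) :=
    calc ε / (α + 1) * (φ (c + α * h) - φ c)
        ≤ ε / (α + 1) * ((α + 1) * (φ (c + h) - φ c + h)) := by gcongr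
      _ = ε * (φ (c + h) - φ c + h) := by field_simp
  rw [add_sub_cancel_left]
  linarith

/-- Monotonicity criterion: if `F` satisfies the one-sided upper limit conditions and
has positive lower `φ,α`-controlled derivates outside a countable set, it is increasing. -/
theorem stmt_4 (a b : ℝ) (F : ℝ → ℝ)
    (h1 : ∀ x ∈ Set.Ioo a b,
      Filter.limsup (fun y => (F y : EReal)) (𝓝[Set.Ioo a x] x) ≤ (F x : EReal) ∧
      (F x : EReal) ≤ Filter.limsup (fun y => (F y : EReal)) (𝓝[Set.Ioo x b] x))
    (h2 : ∃ φ : ℝ → ℝ, ∃ α : ℝ, 0 < α ∧ StrictMonoOn φ (Set.Ioo a b) ∧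
      ∃ S : Set ℝ, S.Countable ∧ ∀ x ∈ Set.Ioo a b \ S,
        (0 : EReal) ≤ Filter.liminf
          (fun h => (((F (x + h) - F x) / (φ (x + α * h) - φ x) : ℝ) : EReal))
          (𝓝[Set.Ioi (0 : ℝ)] 0)) :
    MonotoneOn F (Set.Ioo a b) := by
  obtain ⟨φ, α, hα, hφ, S, hS, hd⟩ := h2
  obtain ⟨s, hSs⟩ := Set.countable_iff_exists_subset_range.1 hS
  intro x hx y hy hxy
  have hsub : Icc x y ⊆ Ioo a b := Icc_subset_Ioo hx.1 hy.2
  refine le_of_limsup_nhdsLT_le_of_frequently_nhdsGT (G := fun z => φ z + geomJump s z + z) hxy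
    (((hφ.monotoneOn.mono hsub).add ((monotone_geomJump s).monotoneOn _)).add monotoneOn_id)
    (fun c hc => ?_) fun c hc ε hε => ?_
  · have hc' := hsub (Ioc_subset_Icc_self hc)
    simpa only [nhdsWithin_Ioo_eq_nhdsLT hc'.1] using (h1 c hc').1
  have hc' := hsub (Ico_subset_Icc_self hc)
  have hφc : StrictMonoOn φ (Ico c b) := hφ.mono (Ico_subset_Ioo_left hc'.1)
  have hφz : ∀ᶠ z in 𝓝[>] c, c < z ∧ φ c ≤ φ z := eventually_of_mem (Ioo_mem_nhdsGT hc'.2)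
    fun z hz => ⟨hz.1, hφc.monotoneOn (left_mem_Ico.2 hc'.2) (Ioo_subset_Ico_self hz) hz.1.le⟩
  by_cases hcs : c ∈ range s
  · obtain ⟨n, rfl⟩ := hcs
    refine frequently_add_mul_le_of_le_limsup (G := fun z => φ z + geomJump s z + z) ?_
      (pow_pos one_half_pos n) hε (hφz.mono fun z ⟨hcz, hφcz⟩ => ?_)
    · simpa only [nhdsWithin_Ioo_eq_nhdsGT hc'.2] using (h1 _ hc').2
    · linarith [geomJump_add_le s n hcz]
  · refine ((frequently_sub_le_of_liminf_nonneg hc'.2 hφc hα hε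
      (hd c ⟨hc', fun h => hcs (hSs h)⟩)).and_eventually hφz).mono fun z ⟨hFz, hcz, _⟩ => ?_
    have := mul_le_mul_of_nonneg_left (monotone_geomJump s hcz.le) hε.le
    nlinarith
end

section
/- Let α > 0 and let (a,b) ⊆ ℝ be an open interval. If F is an indefinite MC^α integral of f on (a,b) and f(x) ≥ 0 for every x ∈ (a,b), then F is increasing (monotone nondecreasing) on (a,b). -/
open Filter Set Topology MeasureTheory

/-! For `ε > 0` put `G = F + ε (φ + id)`. At every point `x`, `limsup_{y → x⁻} G y ≤ G x`, and
`G x ≤ G y` for `y` arbitrarily close to `x` on the right; a supremum argument then shows that `G`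
is increasing, and letting `ε → 0` gives the claim.

On the left, the control term `ε (φ x - φ (x - α h))` is compensated by `ε (φ x - φ (x - h))` up
to an error that tends to zero, since `φ (x - h)` and `φ (x - α h)` both tend to the left limit
of `φ` at `x`. On the right, `φ (x + α h) - φ x` may be much larger than `φ (x + h) - φ x`, but
not by a factor `α + 1` for all small `h`: iterating `h ↦ h / α` would then make
`φ (x + h) - φ x + h` decay faster than `h`. -/

lemma exists_mem_Ioo_apply_mul_le {α K δ : ℝ} {h : ℝ → ℝ} (hα : 1 ≤ α) (hαK : α < K)
    (hδ : 0 < δ) (hh : ∀ t ∈ Ioo 0 δ, t ≤ h t) :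
    ∃ t ∈ Ioo 0 δ, h (α * t) ≤ K * h t := by
  by_contra! hgrow
  have hα0 : 0 < α := by linarith
  have hK0 : 0 < K := by linarith
  set t : ℕ → ℝ := fun n => δ / 2 / α ^ n
  have ht : ∀ n, t n ∈ Ioo 0 δ := fun n =>
    ⟨by positivity, (div_le_self (by positivity) (one_le_pow₀ hα)).trans_lt (by linarith)⟩
  have hiter : ∀ n, K ^ n * h (t n) ≤ h (t 0) := by
    intro n
    induction n with
    | zero => simp
    | succ n ih =>
      have hstep : α * t (n + 1) = t n := by simp only [t]; field_simp; ring
      have hgrow_n := hgrow (t (n + 1)) (ht (n + 1))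
      rw [hstep] at hgrow_n
      calc K ^ (n + 1) * h (t (n + 1)) = K ^ n * (K * h (t (n + 1))) := by ring
        _ ≤ K ^ n * h (t n) := by gcongr
        _ ≤ h (t 0) := ih
  obtain ⟨n, hn⟩ := pow_unbounded_of_one_lt (h (t 0) / (δ / 2)) ((one_lt_div hα0).2 hαK)
  have hKt : K ^ n * t n = (K / α) ^ n * (δ / 2) := by simp only [t]; rw [div_pow]; ring
  have hbounded : (K / α) ^ n * (δ / 2) ≤ h (t 0) := by
    rw [← hKt]
    exact (mul_le_mul_of_nonneg_left (hh _ (ht n)) (by positivity)).trans (hiter n)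
  rw [div_lt_iff₀ (by positivity)] at hn
  linarith

lemma frequently_dilate_sub_le {φ : ℝ → ℝ} {α x c : ℝ} (hα : 0 < α) (hxc : x < c)
    (hφ : MonotoneOn φ (Ico x c)) :
    ∃ᶠ y in 𝓝[>] x, φ (x + α * (y - x)) - φ x ≤ (α + 1) * (φ y - φ x + (y - x)) := by
  rw [(nhdsGT_basis x).frequently_iff]
  intro d hxd
  rcases le_or_gt α 1 with hα1 | hα1
  · obtain ⟨y, hxy, hy⟩ := exists_between (lt_min hxd hxc)
    have hyc : y < c := hy.trans_le (min_le_right _ _)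
    have hzy : φ (x + α * (y - x)) ≤ φ y :=
      hφ ⟨by nlinarith, by nlinarith⟩ ⟨hxy.le, hyc⟩ (by nlinarith)
    have hxy' : φ x ≤ φ y := hφ ⟨le_rfl, hxc⟩ ⟨hxy.le, hyc⟩ hxy.le
    exact ⟨y, ⟨hxy, hy.trans_le (min_le_left _ _)⟩, by nlinarith⟩
  · obtain ⟨t, ⟨ht0, htδ⟩, ht⟩ := exists_mem_Ioo_apply_mul_le (h := fun t => φ (x + t) - φ x + t)
      hα1.le (lt_add_one α) (lt_min (sub_pos.2 hxd) (sub_pos.2 hxc)) fun t ht => by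
        have hφt : φ x ≤ φ (x + t) :=
          hφ ⟨le_rfl, hxc⟩ ⟨by linarith [ht.1], by linarith [ht.2.trans_le (min_le_right _ _)]⟩
            (by linarith [ht.1])
        linarith
    have htd := htδ.trans_le (min_le_left _ _)
    refine ⟨x + t, ⟨by linarith, by linarith⟩, ?_⟩
    simp only [add_sub_cancel_left] at ht ⊢
    nlinarith

lemma le_of_upperSemicontinuousWithinAt_of_frequently_le {G : ℝ → ℝ} {u v : ℝ} (huv : u ≤ v)
    (hleft : ∀ x ∈ Icc u v, UpperSemicontinuousWithinAt G (Iic x) x)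
    (hright : ∀ x ∈ Ico u v, ∃ᶠ y in 𝓝[>] x, G x ≤ G y) :
    G u ≤ G v := by
  set S := {t ∈ Icc u v | G u ≤ G t}
  have huS : u ∈ S := ⟨left_mem_Icc.2 huv, le_rfl⟩
  obtain ⟨s, hS⟩ : ∃ s, IsLUB S s := ⟨_, isLUB_csSup ⟨u, huS⟩ ⟨v, fun t ht => ht.1.2⟩⟩
  have hus : u ≤ s := hS.1 huS
  have hsv : s ≤ v := hS.2 fun t ht => ht.1.2
  have hsS : G u ≤ G s := by
    refine le_of_forall_pos_lt_add fun η hη => ?_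
    obtain ⟨w, hwS, hw⟩ := ((hS.frequently_mem ⟨u, huS⟩).and_eventually
      (hleft s ⟨hus, hsv⟩ _ (lt_add_of_pos_right _ hη))).exists
    exact hwS.2.trans_lt hw
  obtain rfl | hsv := hsv.eq_or_lt
  · exact hsS
  obtain ⟨y, hy, hsy, hyv⟩ :=
    ((hright s ⟨hus, hsv⟩).and_eventually (Ioo_mem_nhdsGT hsv)).exists
  exact absurd (hS.1 ⟨⟨hus.trans hsy.le, hyv.le⟩, hsS.trans hy⟩) (not_le.2 hsy)

namespace IsControlFn

variable {α : ℝ} {I : Set ℝ} {F f φ : ℝ → ℝ} {x : ℝ}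

lemma eventually_abs_le (hc : IsControlFn α I F f φ) (hI : IsOpen I) (hα : α ≠ 0) (hx : x ∈ I)
    {ε : ℝ} (hε : 0 < ε) :
    ∀ᶠ y in 𝓝[≠] x, x + α * (y - x) ∈ I ∧
      |F y - F x - f x * (y - x)| ≤ ε * |φ (x + α * (y - x)) - φ x| := by
  have hdil : Tendsto (fun y => x + α * (y - x)) (𝓝 x) (𝓝 x) :=
    (by fun_prop : Continuous fun y => x + α * (y - x)).tendsto' x x (by simp)
  have hnhds : 𝓝[I \ {x}] x = 𝓝[≠] x := by
    rw [sdiff_eq, nhdsWithin_inter_of_mem (mem_nhdsWithin_of_mem_nhds (hI.mem_nhds hx))]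
  have hq := Metric.tendsto_nhds.mp (hc.2 x hx) ε hε
  rw [hnhds] at hq
  filter_upwards [(hdil.eventually (hI.mem_nhds hx)).filter_mono nhdsWithin_le_nhds, hq,
    self_mem_nhdsWithin] with y hzI hq hyx
  refine ⟨hzI, ?_⟩
  have hzx : x + α * (y - x) ≠ x := by
    simpa [hα, sub_eq_zero] using hyx
  have hD : φ (x + α * (y - x)) - φ x ≠ 0 := sub_ne_zero.2 (hc.1.injOn.ne hzI hx hzx)
  rw [Real.dist_eq, sub_zero, abs_div, div_lt_iff₀ (abs_pos.2 hD)] at hq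
  linarith

lemma frequently_le_right (hc : IsControlFn α I F f φ) (hI : IsOpen I) (hα : 0 < α) (hx : x ∈ I)
    (hfx : 0 ≤ f x) {ε : ℝ} (hε : 0 < ε) :
    ∃ᶠ y in 𝓝[>] x, F x + ε * (φ x + x) ≤ F y + ε * (φ y + y) := by
  obtain ⟨c, hxc, hIc⟩ := exists_Ico_subset_of_mem_nhds (hI.mem_nhds hx) ⟨x + 1, by linarith⟩
  have hε' : 0 < ε / (α + 1) := by positivity
  have hbound := (hc.eventually_abs_le hI hα.ne' hx hε').filter_mono
    (nhdsWithin_mono x fun y (hy : x < y) => hy.ne')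
  refine ((frequently_dilate_sub_le hα hxc (hc.1.monotoneOn.mono hIc)).and_eventually
    (hbound.and (Ioo_mem_nhdsGT hxc))).mono ?_
  rintro y ⟨hscale, ⟨hzI, hy⟩, hxy, hyc⟩
  have hφz : φ x ≤ φ (x + α * (y - x)) := hc.1.monotoneOn hx hzI (by nlinarith)
  rw [abs_of_nonneg (sub_nonneg.2 hφz)] at hy
  have hscale' := mul_le_mul_of_nonneg_left hscale hε'.le
  rw [← mul_assoc, div_mul_cancel₀ _ (by linarith)] at hscale'
  have hdrift := mul_nonneg hfx (sub_nonneg.2 hxy.le)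
  linarith [(abs_le.1 hy).1]

lemma upperSemicontinuousWithinAt (hc : IsControlFn α I F f φ) (hI : IsOpen I) (hα : 0 < α)
    (hx : x ∈ I) (hfx : 0 ≤ f x) {ε : ℝ} (hε : 0 < ε) :
    UpperSemicontinuousWithinAt (fun y => F y + ε * (φ y + y)) (Iic x) x := by
  intro c hc'
  rw [← Iio_insert, nhdsWithin_insert, eventually_sup, eventually_pure]
  refine ⟨hc', ?_⟩
  obtain ⟨l, hlx, hIl⟩ := exists_Ioc_subset_of_mem_nhds (hI.mem_nhds hx) ⟨x - 1, by linarith⟩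
  have hφmono : MonotoneOn φ I := hc.1.monotoneOn
  have hlim := MonotoneOn.tendsto_nhdsWithin_Ioo_left (nonempty_Ioo.2 hlx)
    (hφmono.mono (Ioo_subset_Ioc_self.trans hIl))
    ⟨φ x, by rintro _ ⟨y, hy, rfl⟩; exact hφmono (hIl (Ioo_subset_Ioc_self hy)) hx hy.2.le⟩
  have hdil : Tendsto (fun y => x + α * (y - x)) (𝓝[<] x) (𝓝[<] x) := by
    refine tendsto_nhdsWithin_iff.2 ⟨?_, eventually_nhdsWithin_of_forall fun y (hy : y < x) => ?_⟩
    · exact tendsto_nhdsWithin_of_tendsto_nhds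
        ((by fun_prop : Continuous fun y => x + α * (y - x)).tendsto' x x (by simp))
    · show x + α * (y - x) < x
      nlinarith
  have hgap : Tendsto (fun y => φ y - φ (x + α * (y - x))) (𝓝[<] x) (𝓝 0) := by
    simpa using hlim.sub (hlim.comp hdil)
  have hbound := (hc.eventually_abs_le hI hα.ne' hx hε).filter_mono
    (nhdsWithin_mono x fun y (hy : y < x) => hy.ne)
  filter_upwards [hbound, hgap.eventually (gt_mem_nhds (div_pos (sub_pos.2 hc') hε)),
    self_mem_nhdsWithin] with y ⟨hzI, hy⟩ hgapy (hyx : y < x)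
  have hφz : φ (x + α * (y - x)) ≤ φ x := hφmono hzI hx (by nlinarith)
  rw [abs_of_nonpos (sub_nonpos.2 hφz)] at hy
  rw [lt_div_iff₀ hε] at hgapy
  have hdrift := mul_nonneg hfx (sub_nonneg.2 hyx.le)
  have hεy := mul_le_mul_of_nonneg_left hyx.le hε.le
  linarith [(abs_le.1 hy).2]

end IsControlFn

/-- An indefinite `MC^α` integral of a nonnegative function is increasing. -/
theorem stmt_5 (α : ℝ) (hα : 0 < α) (a b : ℝ) (F f : ℝ → ℝ)
    (hF : IsMCIntegral α (Set.Ioo a b) F f)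
    (hf : ∀ x ∈ Set.Ioo a b, 0 ≤ f x) :
    MonotoneOn F (Set.Ioo a b) := by
  obtain ⟨φ, hc⟩ := hF
  intro u hu v hv huv
  have hsub : Icc u v ⊆ Ioo a b := ordConnected_Ioo.out hu hv
  have key : ∀ ε > 0, F u + ε * (φ u + u) ≤ F v + ε * (φ v + v) := fun ε hε =>
    le_of_upperSemicontinuousWithinAt_of_frequently_le huv
      (fun x hx => hc.upperSemicontinuousWithinAt isOpen_Ioo hα (hsub hx) (hf x (hsub hx)) hε)
      (fun x hx => hc.frequently_le_right isOpen_Ioo hα (hsub (Ico_subset_Icc_self hx))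
        (hf x (hsub (Ico_subset_Icc_self hx))) hε)
  have hlim : Tendsto (fun ε : ℝ => F v + ε * (φ v + v - (φ u + u))) (𝓝[>] 0) (𝓝 (F v)) :=
    tendsto_nhdsWithin_of_tendsto_nhds (Continuous.tendsto' (by fun_prop) _ _ (by simp))
  exact ge_of_tendsto hlim (eventually_nhdsWithin_of_forall fun ε hε => by linarith [key ε hε])
end

section
/- Let α > 0 and let (a,b) ⊆ ℝ be an open interval. If F and G are both indefinite MC^α integrals of the same function f on (a,b), then F − G is constant on (a,b). -/
open Filter Set Topology MeasureTheory

/-! With `φ₁, φ₂` controlling `F, G`, the difference `H = F - G` is controlled, with derivative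
`0`, by `Φ = φ₁ + φ₂`, and also for any larger exponent, so we may take `α ≥ 1`. Then
`|H v - H u| ≤ ε (α (Φ v - Φ u) + (v - u))` for every `ε > 0`, by pushing the supremum of the set
of `t ∈ [u, v]` where this holds to `v`. `Φ` may jump, but `H` is continuous, which gives the
supremum `m` itself. To move past `m` one needs small `k` with
`Φ (m + α k) - Φ m ≤ α (Φ (m + k) - Φ m) + k`; if there were none, `α ^ n (Φ (m + θ / α ^ n) - Φ m)`
would drop by `θ / α` at every step, contradicting its nonnegativity. -/

theorem exists_apply_mul_le_mul_apply_add {β θ : ℝ} {ψ : ℝ → ℝ} (hβ : 1 ≤ β) (hθ : 0 < θ)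
    (hψ : ∀ s ∈ Ioc 0 θ, 0 ≤ ψ s) : ∃ k > 0, β * k ≤ θ ∧ ψ (β * k) ≤ β * ψ k + k := by
  by_contra! hcon
  have hβ0 : 0 < β := by linarith
  set c : ℕ → ℝ := fun n => β ^ n * ψ (θ / β ^ n) with hc
  have hmem (n : ℕ) : θ / β ^ n ∈ Ioc 0 θ :=
    ⟨by positivity, div_le_self hθ.le (one_le_pow₀ hβ)⟩
  have hstep (n : ℕ) : c (n + 1) + θ / β ≤ c n := by
    have hshift : β * (θ / β ^ (n + 1)) = θ / β ^ n := by field_simp; ring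
    have hlt := hcon _ (hmem (n + 1)).1 (hshift ▸ (hmem n).2)
    rw [hshift] at hlt
    have hscale : β ^ n * (θ / β ^ (n + 1)) = θ / β := by field_simp; ring
    calc c (n + 1) + θ / β
        = β ^ n * (β * ψ (θ / β ^ (n + 1)) + θ / β ^ (n + 1)) := by
          rw [mul_add, hscale, hc]; ring
      _ ≤ c n := mul_le_mul_of_nonneg_left hlt.le (by positivity)
  have hsum (n : ℕ) : c n + n * (θ / β) ≤ c 0 := by
    induction n with
    | zero => simp
    | succ n ih => push_cast; linarith [hstep n]
  obtain ⟨n, hn⟩ := exists_nat_gt (c 0 / (θ / β))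
  rw [div_lt_iff₀ (by positivity)] at hn
  linarith [hsum n, mul_nonneg (pow_nonneg hβ0.le n) (hψ _ (hmem n))]

theorem eventually_add_mul_sub_mem {x : ℝ} {U : Set ℝ} (hU : U ∈ 𝓝 x) (α : ℝ) (s : Set ℝ) :
    ∀ᶠ y in 𝓝[s] x, x + α * (y - x) ∈ U := by
  have hcont : Tendsto (fun y => x + α * (y - x)) (𝓝 x) (𝓝 x) := by
    have : Continuous fun y => x + α * (y - x) := by fun_prop
    simpa using this.tendsto x
  exact (hcont.eventually_mem hU).filter_mono nhdsWithin_le_nhds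

theorem StrictMonoOn.eventually_apply_add_mul_sub_ne {φ : ℝ → ℝ} {I : Set ℝ} {α x : ℝ}
    (hφ : StrictMonoOn φ I) (hα : α ≠ 0) (hI : IsOpen I) (hx : x ∈ I) :
    ∀ᶠ y in 𝓝[I \ {x}] x, φ (x + α * (y - x)) - φ x ≠ 0 := by
  filter_upwards [eventually_add_mul_sub_mem (hI.mem_nhds hx) α _, self_mem_nhdsWithin]
    with y hz hy
  refine sub_ne_zero.2 (hφ.injOn.ne hz hx ?_)
  simpa [hα, sub_eq_zero] using hy.2

namespace IsControlFn

variable {α β : ℝ} {I : Set ℝ} {F G f g φ ψ : ℝ → ℝ}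

theorem of_abs_sub_le (h : IsControlFn α I F f φ) (hα : α ≠ 0) (hI : IsOpen I)
    (hψ : StrictMonoOn ψ I)
    (hle : ∀ x ∈ I, ∀ᶠ y in 𝓝[I \ {x}] x,
      |φ (x + α * (y - x)) - φ x| ≤ |ψ (x + β * (y - x)) - ψ x|) :
    IsControlFn β I F f ψ := by
  refine ⟨hψ, fun x hx => squeeze_zero_norm' ?_ (tendsto_zero_iff_norm_tendsto_zero.1 (h.2 x hx))⟩
  filter_upwards [hle x hx, h.1.eventually_apply_add_mul_sub_ne hα hI hx] with y hy hne
  simp only [Real.norm_eq_abs, abs_div]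
  exact div_le_div_of_nonneg_left (abs_nonneg _) (abs_pos.2 hne) hy

theorem add_monotoneOn (h : IsControlFn α I F f φ) (hα : α ≠ 0) (hI : IsOpen I)
    (hψ : MonotoneOn ψ I) : IsControlFn α I F f (φ + ψ) := by
  refine h.of_abs_sub_le hα hI (h.1.add_monotone hψ) fun x hx => ?_
  filter_upwards [eventually_add_mul_sub_mem (hI.mem_nhds hx) α _] with y hz
  simp only [Pi.add_apply]
  rcases le_total (x + α * (y - x)) x with hzx | hxz
  · have := h.1.monotoneOn hz hx hzx
    have := hψ hz hx hzx
    rw [abs_of_nonpos (by linarith), abs_of_nonpos (by linarith)]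
    linarith
  · have := h.1.monotoneOn hx hz hxz
    have := hψ hx hz hxz
    rw [abs_of_nonneg (by linarith), abs_of_nonneg (by linarith)]
    linarith

theorem mono_exponent (h : IsControlFn α I F f φ) (hα : 0 < α) (hαβ : α ≤ β) (hI : IsOpen I) :
    IsControlFn β I F f φ := by
  refine h.of_abs_sub_le hα.ne' hI h.1 fun x hx => ?_
  filter_upwards [eventually_add_mul_sub_mem (hI.mem_nhds hx) α _,
    eventually_add_mul_sub_mem (hI.mem_nhds hx) β _] with y hzα hzβ
  have hφ := h.1.monotoneOn
  rcases le_total y x with hyx | hxy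
  · have := hφ hzβ hzα (show x + β * (y - x) ≤ x + α * (y - x) by nlinarith)
    have := hφ hzα hx (show x + α * (y - x) ≤ x by nlinarith)
    rw [abs_of_nonpos (by linarith), abs_of_nonpos (by linarith)]
    linarith
  · have := hφ hzα hzβ (show x + α * (y - x) ≤ x + β * (y - x) by nlinarith)
    have := hφ hx hzα (show x ≤ x + α * (y - x) by nlinarith)
    rw [abs_of_nonneg (by linarith), abs_of_nonneg (by linarith)]
    linarith

theorem sub (hF : IsControlFn α I F f φ) (hG : IsControlFn α I G g φ) :
    IsControlFn α I (F - G) (f - g) φ := by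
  refine ⟨hF.1, fun x hx => ?_⟩
  simpa only [sub_zero] using ((hF.2 x hx).sub (hG.2 x hx)).congr fun y => by
    simp only [Pi.sub_apply]; ring

theorem continuousOn (h : IsControlFn α I F f φ) (hα : α ≠ 0) (hI : IsOpen I) :
    ContinuousOn F I := by
  intro x hx
  obtain ⟨p, q, hxpq, hpq, hsub⟩ := exists_Icc_mem_subset_of_mem_nhds (hI.mem_nhds hx)
  have hp : p ∈ I := hsub ⟨le_rfl, hxpq.1.trans hxpq.2⟩
  have hq : q ∈ I := hsub ⟨hxpq.1.trans hxpq.2, le_rfl⟩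
  have hφ := h.1.monotoneOn
  have := hφ hp hx hxpq.1
  have := hφ hx hq hxpq.2
  have hbdd : ∀ᶠ y in 𝓝[I \ {x}] x, ‖φ (x + α * (y - x)) - φ x‖ ≤ φ q - φ p := by
    filter_upwards [eventually_add_mul_sub_mem hpq α _] with y hz
    have := hφ hp (hsub hz) hz.1
    have := hφ (hsub hz) hq hz.2
    rw [Real.norm_eq_abs, abs_sub_le_iff]
    constructor <;> linarith
  have hnum : Tendsto (fun y => F y - F x - f x * (y - x)) (𝓝[I \ {x}] x) (𝓝 0) :=
    ((h.2 x hx).zero_mul_isBoundedUnder_le ⟨_, hbdd⟩).congr'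
      ((h.1.eventually_apply_add_mul_sub_ne hα hI hx).mono fun y hy => div_mul_cancel₀ _ hy)
  have hlin : Tendsto (fun y => f x * (y - x)) (𝓝[I \ {x}] x) (𝓝 0) := by
    have : Continuous fun y => f x * (y - x) := by fun_prop
    simpa using (this.tendsto x).mono_left nhdsWithin_le_nhds
  rw [← continuousWithinAt_sdiff_self, ContinuousWithinAt, ← tendsto_sub_nhds_zero_iff]
  simpa using hnum.add hlin


theorem eventually_abs_sub_le (h : IsControlFn α I F f φ) (hα : 0 < α) (hI : IsOpen I) {x ε : ℝ}
    (hx : x ∈ I) (hε : 0 < ε) :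
    ∀ᶠ y in 𝓝[>] x, |F y - F x - f x * (y - x)| ≤ ε * (φ (x + α * (y - x)) - φ x) := by
  have hle : 𝓝[>] x ≤ 𝓝[I \ {x}] x := nhdsWithin_le_of_mem <|
    mem_of_superset (inter_mem (mem_nhdsWithin_of_mem_nhds (hI.mem_nhds hx)) self_mem_nhdsWithin)
      fun y hy => ⟨hy.1, ne_of_gt hy.2⟩
  filter_upwards [(h.2 x hx).eventually (Metric.ball_mem_nhds 0 hε) |>.filter_mono hle,
    eventually_add_mul_sub_mem (hI.mem_nhds hx) α _, self_mem_nhdsWithin] with y hy hz hxy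
  have hden : 0 < φ (x + α * (y - x)) - φ x :=
    sub_pos.2 (h.1 hx hz (lt_add_of_pos_right x (mul_pos hα (sub_pos.2 hxy))))
  rw [dist_zero_right, Real.norm_eq_abs, abs_div,
    abs_of_pos hden, div_lt_iff₀ hden] at hy
  exact hy.le

theorem abs_sub_le_of_one_le (h : IsControlFn α I F 0 φ) (hα : 1 ≤ α) (hI : IsOpen I)
    (hI' : I.OrdConnected) {u v ε : ℝ} (hu : u ∈ I) (hv : v ∈ I) (huv : u ≤ v) (hε : 0 < ε) :
    |F v - F u| ≤ ε * (α * (φ v - φ u) + (v - u)) := by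
  set S := {t ∈ Icc u v | |F t - F u| ≤ ε * (α * (φ t - φ u) + (t - u))}
  have huS : u ∈ S := ⟨left_mem_Icc.2 huv, by simp⟩
  have hbdd : BddAbove S := ⟨v, fun t ht => ht.1.2⟩
  set m := sSup S
  have hum : u ≤ m := le_csSup hbdd huS
  have hmv : m ≤ v := csSup_le ⟨u, huS⟩ fun t ht => ht.1.2
  have hIcc : Icc u v ⊆ I := hI'.out hu hv
  have hmI : m ∈ I := hIcc ⟨hum, hmv⟩
  have hφ := h.1.monotoneOn
  have hmS : m ∈ S := by
    refine ⟨⟨hum, hmv⟩, ?_⟩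
    have := mem_closure_iff_nhdsWithin_neBot.1 (csSup_mem_closure ⟨u, huS⟩ hbdd)
    have hcont : Tendsto F (𝓝[S] m) (𝓝 (F m)) :=
      (((h.continuousOn (by linarith) hI).continuousAt (hI.mem_nhds hmI)).tendsto).mono_left
        nhdsWithin_le_nhds
    refine le_of_tendsto (hcont.sub_const (F u)).abs
      (eventually_nhdsWithin_of_forall fun t ht => ht.2.trans ?_)
    have htm : t ≤ m := le_csSup hbdd ht
    have := hφ (hIcc ht.1) hmI htm
    gcongr
  rcases hmv.eq_or_lt with hmv | hmv
  · exact hmv ▸ hmS.2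
  exfalso
  obtain ⟨w, hwm, hw⟩ := mem_nhdsGT_iff_exists_Ioc_subset.1
    ((h.eventually_abs_sub_le (by linarith) hI hmI hε).and (Ioo_mem_nhdsGT hmv))
  have hwI : ∀ s ∈ Ioc 0 (w - m), m + s ∈ I := fun s hs =>
    hIcc ⟨by linarith [hs.1], (hw ⟨by linarith [hs.1], by linarith [hs.2]⟩).2.2.le⟩
  obtain ⟨k, hk, hkw, hkey⟩ := exists_apply_mul_le_mul_apply_add (ψ := fun s => φ (m + s) - φ m)
    hα (sub_pos.2 hwm) fun s hs => sub_nonneg.2 (hφ hmI (hwI s hs) (by linarith [hs.1]))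
  have hkα : k ≤ α * k := le_mul_of_one_le_left hk.le hα
  obtain ⟨hbound, -, hkv⟩ := hw (show m + k ∈ Ioc m w from ⟨by linarith, by linarith⟩)
  simp only [Pi.zero_apply, zero_mul, sub_zero, add_sub_cancel_left] at hbound
  have hkS : m + k ∈ S := by
    refine ⟨⟨by linarith, hkv.le⟩, ?_⟩
    calc |F (m + k) - F u| ≤ |F (m + k) - F m| + |F m - F u| := abs_sub_le _ _ _
      _ ≤ ε * (φ (m + α * k) - φ m) + ε * (α * (φ m - φ u) + (m - u)) := add_le_add hbound hmS.2
      _ ≤ ε * (α * (φ (m + k) - φ m) + k) + ε * (α * (φ m - φ u) + (m - u)) := by gcongr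
      _ = ε * (α * (φ (m + k) - φ u) + (m + k - u)) := by ring
  linarith [le_csSup hbdd hkS]

theorem apply_eq_apply (h : IsControlFn α I F 0 φ) (hα : 0 < α) (hI : IsOpen I)
    (hI' : I.OrdConnected) {u v : ℝ} (hu : u ∈ I) (hv : v ∈ I) : F u = F v := by
  wlog huv : u ≤ v generalizing u v
  · exact (this hv hu (le_of_not_ge huv)).symm
  have h₁ := h.mono_exponent hα (le_max_left α 1) hI
  set K := max α 1 * (φ v - φ u) + (v - u)
  have hK : Tendsto (fun ε => ε * K) (𝓝[>] 0) (𝓝 0) := by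
    simpa using ((continuous_mul_const K).tendsto 0).mono_left nhdsWithin_le_nhds
  have : |F v - F u| ≤ 0 := ge_of_tendsto hK <| eventually_nhdsWithin_of_forall fun ε hε =>
    h₁.abs_sub_le_of_one_le (le_max_right α 1) hI hI' hu hv huv hε
  exact (sub_eq_zero.1 (abs_nonpos_iff.1 this)).symm

end IsControlFn

/-- Uniqueness of the indefinite `MC^α` integral up to an additive constant. -/
theorem stmt_6 (α : ℝ) (hα : 0 < α) (a b : ℝ) (F G f : ℝ → ℝ)
    (hF : IsMCIntegral α (Set.Ioo a b) F f)
    (hG : IsMCIntegral α (Set.Ioo a b) G f) :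
    ∃ c : ℝ, ∀ x ∈ Set.Ioo a b, F x - G x = c := by
  obtain ⟨φ₁, h₁⟩ := hF
  obtain ⟨φ₂, h₂⟩ := hG
  have hH : IsControlFn α (Ioo a b) (F - G) 0 (φ₁ + φ₂) := by
    have h₂' := h₂.add_monotoneOn hα.ne' isOpen_Ioo h₁.1.monotoneOn
    rw [add_comm] at h₂'
    simpa only [sub_self] using
      (h₁.add_monotoneOn hα.ne' isOpen_Ioo h₂.1.monotoneOn).sub h₂'
  rcases (Ioo a b).eq_empty_or_nonempty with hI | ⟨x₀, hx₀⟩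
  · exact ⟨0, by simp [hI]⟩
  · exact ⟨F x₀ - G x₀, fun x hx => hH.apply_eq_apply hα isOpen_Ioo ordConnected_Ioo hx hx₀⟩
end

section
/- Let (a,b) ⊆ ℝ be an open interval and let f : (a,b) → ℝ be a Lebesgue measurable function that is locally bounded on (a,b) (i.e., bounded on a neighbourhood of every point of (a,b)). Then for every α > 0, f has an indefinite MC^α integral on (a,b). -/
open Filter Set Topology MeasureTheory

/-!
Take `F x = ∫_c^x f`. By Lebesgue's differentiation theorem `F' = f` outside a null set `N`,
and `F` is Lipschitz near every point because `f` is locally bounded. Cover `N` by open sets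
`Uₖ` with `|Uₖ| < 2⁻ᵏ`; then `ψ v = ∑ₖ |Uₖ ∩ (-∞, v]|` is monotone and grows at rate at least `m`
on every interval inside `U₀ ∩ ⋯ ∩ Uₘ₋₁`, so `v - x = o(ψ v - ψ x)` at each `x ∈ N`. For
`φ v = v + ψ v` the denominator `φ (x + α h) - φ x` is at least `α |h|` everywhere and is `≫ h`
on `N`, while the numerator is `o(h)` off `N` and `O(h)` on `N`.
-/

open Asymptotics

lemma measureReal_inter_Iic_sub_measureReal_inter_Iic {μ : Measure ℝ} {U : Set ℝ}
    (hU : MeasurableSet U) (hμU : μ U ≠ ⊤) {u v : ℝ} (huv : u ≤ v) :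
    μ.real (U ∩ Iic v) - μ.real (U ∩ Iic u) = μ.real (U ∩ Ioc u v) := by
  have hsplit : U ∩ Iic v = (U ∩ Iic u) ∪ (U ∩ Ioc u v) := by
    rw [← inter_union_distrib_left, Iic_union_Ioc_eq_Iic huv]
  have hdisj : Disjoint (U ∩ Iic u) (U ∩ Ioc u v) :=
    (Iic_disjoint_Ioc le_rfl).mono inter_subset_right inter_subset_right
  rw [hsplit, measureReal_union hdisj (hU.inter measurableSet_Ioc)
    (measure_ne_top_of_subset inter_subset_left hμU)
    (measure_ne_top_of_subset inter_subset_left hμU)]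
  ring

noncomputable def sumMeasureRealInterIic (U : ℕ → Set ℝ) (v : ℝ) : ℝ :=
  ∑' k, volume.real (U k ∩ Iic v)

section sumMeasureRealInterIic

variable {U : ℕ → Set ℝ}

lemma summable_measureReal_inter_Iic (hU : ∀ k, volume (U k) ≤ ENNReal.ofReal ((1 / 2) ^ k))
    (v : ℝ) : Summable fun k => volume.real (U k ∩ Iic v) :=
  Summable.of_nonneg_of_le (fun k => measureReal_nonneg)
    (fun k => ENNReal.toReal_le_of_le_ofReal (by positivity)
      ((measure_mono inter_subset_left).trans (hU k)))
    (summable_geometric_of_lt_one (by norm_num) (by norm_num))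

lemma monotone_measureReal_inter_Iic (hU : ∀ k, volume (U k) ≤ ENNReal.ofReal ((1 / 2) ^ k))
    (k : ℕ) : Monotone fun v => volume.real (U k ∩ Iic v) := fun _ _ huv =>
  measureReal_mono (inter_subset_inter_right _ (Iic_subset_Iic.2 huv))
    (measure_ne_top_of_subset inter_subset_left ((hU k).trans_lt ENNReal.ofReal_lt_top).ne)

lemma monotone_sumMeasureRealInterIic
    (hU : ∀ k, volume (U k) ≤ ENNReal.ofReal ((1 / 2) ^ k)) :
    Monotone (sumMeasureRealInterIic U) := fun u v huv =>
  (summable_measureReal_inter_Iic hU u).tsum_le_tsum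
    (fun k => monotone_measureReal_inter_Iic hU k huv) (summable_measureReal_inter_Iic hU v)

lemma mul_sub_le_sumMeasureRealInterIic_sub (hUm : ∀ k, MeasurableSet (U k))
    (hU : ∀ k, volume (U k) ≤ ENNReal.ofReal ((1 / 2) ^ k)) {m : ℕ} {u v : ℝ} (huv : u ≤ v)
    (hsub : ∀ k < m, Ioc u v ⊆ U k) :
    m * (v - u) ≤ sumMeasureRealInterIic U v - sumMeasureRealInterIic U u := by
  set ψk := fun k v => volume.real (U k ∩ Iic v)
  have hsum := summable_measureReal_inter_Iic hU
  have hincr : ∀ k < m, ψk k v - ψk k u = v - u := fun k hk => by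
    rw [measureReal_inter_Iic_sub_measureReal_inter_Iic (hUm k)
      ((hU k).trans_lt ENNReal.ofReal_lt_top).ne huv, inter_eq_right.2 (hsub k hk),
      Real.volume_real_Ioc_of_le huv]
  calc (m : ℝ) * (v - u) = ∑ k ∈ Finset.range m, (ψk k v - ψk k u) := by
        rw [Finset.sum_congr rfl fun k hk => hincr k (Finset.mem_range.1 hk), Finset.sum_const,
          Finset.card_range, nsmul_eq_mul]
    _ ≤ ∑' k, (ψk k v - ψk k u) := ((hsum v).sub (hsum u)).sum_le_tsum _ fun k _ =>
        sub_nonneg.2 (monotone_measureReal_inter_Iic hU k huv)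
    _ = sumMeasureRealInterIic U v - sumMeasureRealInterIic U u := (hsum v).tsum_sub (hsum u)

lemma mul_abs_sub_le_abs_sumMeasureRealInterIic_sub (hUm : ∀ k, MeasurableSet (U k))
    (hU : ∀ k, volume (U k) ≤ ENNReal.ofReal ((1 / 2) ^ k)) {m : ℕ} {u v : ℝ}
    (hsub : ∀ k < m, uIoc u v ⊆ U k) :
    m * |v - u| ≤ |sumMeasureRealInterIic U v - sumMeasureRealInterIic U u| := by
  have hm := m.cast_nonneg (α := ℝ)
  rcases le_total u v with huv | hvu
  · have := mul_sub_le_sumMeasureRealInterIic_sub hUm hU huv fun k hk =>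
      uIoc_of_le huv ▸ hsub k hk
    rwa [abs_of_nonneg (sub_nonneg.2 huv), abs_of_nonneg (by nlinarith)]
  · have := mul_sub_le_sumMeasureRealInterIic_sub hUm hU hvu fun k hk =>
      uIoc_of_ge hvu ▸ hsub k hk
    rwa [abs_sub_comm, abs_sub_comm (sumMeasureRealInterIic U v),
      abs_of_nonneg (sub_nonneg.2 hvu), abs_of_nonneg (by nlinarith)]

end sumMeasureRealInterIic

theorem exists_monotone_isLittleO_of_measure_zero {N : Set ℝ} (hN : volume N = 0) :
    ∃ ψ : ℝ → ℝ, Monotone ψ ∧ ∀ x ∈ N, (fun v => v - x) =o[𝓝 x] fun v => ψ v - ψ x := by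
  have hU : ∀ k : ℕ, ∃ U ⊇ N, IsOpen U ∧ volume U < ENNReal.ofReal ((1 / 2) ^ k) := fun k =>
    N.exists_isOpen_lt_of_lt _ (by rw [hN]; positivity)
  choose U hNU hUo hUvol using hU
  have hUm k := (hUo k).measurableSet
  have hUle k := (hUvol k).le
  refine ⟨sumMeasureRealInterIic U, monotone_sumMeasureRealInterIic hUle, fun x hx => ?_⟩
  refine isLittleO_iff.2 fun c hc => ?_
  obtain ⟨m, hm⟩ := exists_nat_ge c⁻¹
  obtain ⟨δ, hδ, hball⟩ := Metric.isOpen_iff.1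
    (isOpen_biInter_finset fun k _ => hUo k) x (mem_iInter₂.2 fun k _ => hNU k hx)
  filter_upwards [Metric.ball_mem_nhds x hδ] with v hv
  have hsub : ∀ k < m, uIoc x v ⊆ U k := fun k hk t ht =>
    mem_iInter₂.1 (hball ((convex_ball x δ).ordConnected.uIcc_subset (Metric.mem_ball_self hδ)
      hv (uIoc_subset_uIcc ht))) k (Finset.mem_range.2 hk)
  rw [Real.norm_eq_abs, Real.norm_eq_abs]
  calc |v - x| = c * (c⁻¹ * |v - x|) := by field_simp
    _ ≤ c * (m * |v - x|) := by gcongr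
    _ ≤ _ := by gcongr; exact mul_abs_sub_le_abs_sumMeasureRealInterIic_sub hUm hUle hsub

lemma Monotone.abs_sub_le_abs_add_sub {g h : ℝ → ℝ} (hg : Monotone g) (hh : Monotone h)
    (u v : ℝ) : |g v - g u| ≤ |(g v + h v) - (g u + h u)| := by
  rw [show g v + h v - (g u + h u) = (g v - g u) + (h v - h u) by ring]
  rcases le_total u v with huv | hvu
  · have := hg huv; have := hh huv
    rw [abs_of_nonneg (by linarith), abs_of_nonneg (by linarith)]
    linarith
  · have := hg hvu; have := hh hvu
    rw [abs_of_nonpos (by linarith), abs_of_nonpos (by linarith)]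
    linarith

lemma abs_sub_le_abs_sub_of_monotone_sub_id {φ : ℝ → ℝ} (hφ : Monotone fun t => φ t - t)
    (u v : ℝ) : |v - u| ≤ |φ v - φ u| := by
  simpa using monotone_id.abs_sub_le_abs_add_sub hφ u v

lemma strictMono_of_monotone_sub_id {φ : ℝ → ℝ} (hφ : Monotone fun t => φ t - t) :
    StrictMono φ := fun u v huv => by
  have := hφ huv.le
  linarith

lemma isBigO_sub_comp_affine {φ : ℝ → ℝ} (hφ : Monotone fun t => φ t - t) {α : ℝ}
    (hα : α ≠ 0) (x : ℝ) (l : Filter ℝ) :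
    (fun y => y - x) =O[l] fun y => φ (x + α * (y - x)) - φ x := by
  refine IsBigO.of_bound |α|⁻¹ (Eventually.of_forall fun y => ?_)
  have := abs_sub_le_abs_sub_of_monotone_sub_id hφ x (x + α * (y - x))
  rw [add_sub_cancel_left, abs_mul] at this
  rw [Real.norm_eq_abs, Real.norm_eq_abs, le_inv_mul_iff₀ (abs_pos.2 hα)]
  exact this

lemma Asymptotics.IsLittleO.sub_comp_affine {φ : ℝ → ℝ} {x α : ℝ}
    (h : (fun v => v - x) =o[𝓝 x] fun v => φ v - φ x) (hα : α ≠ 0) :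
    (fun y => y - x) =o[𝓝 x] fun y => φ (x + α * (y - x)) - φ x := by
  have hlim : Tendsto (fun y => x + α * (y - x)) (𝓝 x) (𝓝 x) := by
    have hcont : Continuous fun y => x + α * (y - x) := by fun_prop
    simpa using hcont.tendsto x
  have := h.comp_tendsto hlim
  simp only [Function.comp_def, add_sub_cancel_left] at this
  exact (isLittleO_const_mul_left_iff hα).1 this

lemma exists_monotone_sub_id_isLittleO_of_measure_zero {N : Set ℝ} (hN : volume N = 0) :
    ∃ φ : ℝ → ℝ, (Monotone fun t => φ t - t) ∧
      ∀ x ∈ N, (fun v => v - x) =o[𝓝 x] fun v => φ v - φ x := by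
  obtain ⟨ψ, hψ, hψN⟩ := exists_monotone_isLittleO_of_measure_zero hN
  refine ⟨fun t => ψ t + t, by simpa using hψ, fun x hx => (hψN x hx).trans_isBigO ?_⟩
  refine IsBigO.of_bound 1 (Eventually.of_forall fun v => ?_)
  rw [Real.norm_eq_abs, Real.norm_eq_abs, one_mul]
  exact hψ.abs_sub_le_abs_add_sub monotone_id x v

lemma locallyIntegrableOn_of_isBoundedUnder {X E : Type*} [TopologicalSpace X]
    [MeasurableSpace X] [OpensMeasurableSpace X] [NormedAddCommGroup E] {μ : Measure X}
    [IsLocallyFiniteMeasure μ] {f : X → E} {s : Set X} (hs : MeasurableSet s)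
    (hf : AEStronglyMeasurable f (μ.restrict s))
    (hbdd : ∀ x ∈ s, IsBoundedUnder (· ≤ ·) (𝓝[s] x) (norm ∘ f)) :
    LocallyIntegrableOn f s μ := fun x hx =>
  have := hs.nhdsWithin_isMeasurablyGenerated x
  (μ.finiteAt_nhdsWithin x s).integrableAtFilter ⟨s, self_mem_nhdsWithin, hf⟩ (hbdd x hx)

lemma MeasureTheory.LocallyIntegrableOn.intervalIntegrable {E : Type*} [NormedAddCommGroup E]
    {f : ℝ → E} {s : Set ℝ} {μ : Measure ℝ} (hf : LocallyIntegrableOn f s μ) (hs : s.OrdConnected)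
    {u v : ℝ} (hu : u ∈ s) (hv : v ∈ s) : IntervalIntegrable f μ u v :=
  (hf.integrableOn_compact_subset (hs.uIcc_subset hu hv) isCompact_uIcc).intervalIntegrable

lemma MeasureTheory.LocallyIntegrableOn.ae_hasDerivAt_integral {E : Type*} [NormedAddCommGroup E]
    [NormedSpace ℝ E] [CompleteSpace E] {f : ℝ → E} {a b c : ℝ}
    (hf : LocallyIntegrableOn f (Ioo a b)) (hc : c ∈ Ioo a b) :
    ∀ᵐ x, x ∈ Ioo a b → HasDerivAt (fun x => ∫ t in c..x, f t) (f x) x := by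
  have hqr : ∀ q r : ℚ, ∀ᵐ x, (q : ℝ) ∈ Ioo a b → (r : ℝ) ∈ Ioo a b → x ∈ uIcc (q : ℝ) r →
      ∀ c ∈ uIcc (q : ℝ) r, HasDerivAt (fun x => ∫ t in c..x, f t) (f x) x := by
    intro q r
    by_cases hqr : (q : ℝ) ∈ Ioo a b ∧ (r : ℝ) ∈ Ioo a b
    · filter_upwards [(hf.intervalIntegrable ordConnected_Ioo hqr.1 hqr.2).ae_hasDerivAt_integral]
        with x hx using fun _ _ => hx
    · exact Eventually.of_forall fun x hq hr => absurd ⟨hq, hr⟩ hqr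
  filter_upwards [ae_all_iff.2 fun q => ae_all_iff.2 (hqr q)] with x hx hxI
  obtain ⟨q, hqa, hq⟩ := exists_rat_btwn (lt_min hxI.1 hc.1)
  obtain ⟨r, hr, hrb⟩ := exists_rat_btwn (max_lt hxI.2 hc.2)
  have hqx := hq.trans_le (min_le_left x c)
  have hqc := hq.trans_le (min_le_right x c)
  have hxr := (le_max_left x c).trans_lt hr
  have hcr := (le_max_right x c).trans_lt hr
  exact hx q r ⟨hqa, hqx.trans hxI.2⟩ ⟨hxI.1.trans hxr, hrb⟩ (Icc_subset_uIcc ⟨hqx.le, hxr.le⟩)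
    c (Icc_subset_uIcc ⟨hqc.le, hcr.le⟩)

lemma isBigO_integral_sub_mul_sub {f : ℝ → ℝ} {x : ℝ}
    (hf : IsBoundedUnder (· ≤ ·) (𝓝 x) (norm ∘ f)) :
    (fun y => (∫ t in x..y, f t) - f x * (y - x)) =O[𝓝 x] fun y => y - x := by
  refine IsBigO.sub ?_ ((isBigO_refl _ _).const_mul_left _)
  obtain ⟨C, hC⟩ := hf
  obtain ⟨δ, hδ, hball⟩ := Metric.eventually_nhds_iff_ball.1 hC
  refine IsBigO.of_bound C ?_
  filter_upwards [Metric.ball_mem_nhds x hδ] with y hy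
  refine intervalIntegral.norm_integral_le_of_norm_le_const fun t ht => hball t ?_
  exact (convex_ball x δ).ordConnected.uIcc_subset (Metric.mem_ball_self hδ) hy
    (uIoc_subset_uIcc ht)

lemma isControlFn_of_isLittleO {α : ℝ} {I : Set ℝ} {F f φ : ℝ → ℝ} (hφ : StrictMonoOn φ I)
    (h : ∀ x ∈ I, (fun y => F y - F x - f x * (y - x)) =o[𝓝 x]
      fun y => φ (x + α * (y - x)) - φ x) :
    IsControlFn α I F f φ :=
  ⟨hφ, fun x hx => ((h x hx).mono nhdsWithin_le_nhds).tendsto_div_nhds_zero⟩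

/-- Every measurable locally bounded function on `(a,b)` is `MC^α` integrable for every `α > 0`. -/
theorem stmt_7 (a b : ℝ) (f : ℝ → ℝ)
    (hmeas : Measurable ((Set.Ioo a b).restrict f))
    (hloc : ∀ x ∈ Set.Ioo a b, ∃ C : ℝ, ∀ᶠ y in 𝓝[Set.Ioo a b] x, |f y| ≤ C)
    (α : ℝ) (hα : 0 < α) :
    ∃ F : ℝ → ℝ, IsMCIntegral α (Set.Ioo a b) F f := by
  rcases (Ioo a b).eq_empty_or_nonempty with hI | ⟨c, hc⟩
  · exact ⟨0, id, by simp [IsControlFn, StrictMonoOn, hI]⟩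
  have hbdd : ∀ x ∈ Ioo a b, IsBoundedUnder (· ≤ ·) (𝓝 x) (norm ∘ f) := fun x hx => by
    obtain ⟨C, hC⟩ := hloc x hx
    rw [nhdsWithin_eq_nhds.2 (isOpen_Ioo.mem_nhds hx)] at hC
    exact ⟨C, hC⟩
  have hf : LocallyIntegrableOn f (Ioo a b) :=
    locallyIntegrableOn_of_isBoundedUnder measurableSet_Ioo
      (aemeasurable_restrict_of_measurable_subtype measurableSet_Ioo hmeas).aestronglyMeasurable
      fun x hx => (hbdd x hx).mono nhdsWithin_le_nhds
  set F := fun x => ∫ t in c..x, f t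
  obtain ⟨φ, hφ, hφN⟩ := exists_monotone_sub_id_isLittleO_of_measure_zero
    (ae_iff.1 (hf.ae_hasDerivAt_integral hc))
  refine ⟨F, φ, isControlFn_of_isLittleO ((strictMono_of_monotone_sub_id hφ).strictMonoOn _)
    fun x hx => ?_⟩
  by_cases hFx : HasDerivAt F (f x) x
  · refine IsLittleO.trans_isBigO ?_ (isBigO_sub_comp_affine hφ hα.ne' x _)
    simpa only [smul_eq_mul, mul_comm] using hasDerivAt_iff_isLittleO.1 hFx
  · have hFsub : (fun y => F y - F x) =ᶠ[𝓝 x] fun y => ∫ t in x..y, f t := by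
      filter_upwards [isOpen_Ioo.mem_nhds hx] with y hy
      exact intervalIntegral.integral_interval_sub_left
        (hf.intervalIntegrable ordConnected_Ioo hc hy)
        (hf.intervalIntegrable ordConnected_Ioo hc hx)
    refine IsBigO.trans_isLittleO ?_ ((hφN x fun h => hFx (h hx)).sub_comp_affine hα.ne')
    refine (isBigO_integral_sub_mul_sub (hbdd x hx)).congr' ?_ EventuallyEq.rfl
    filter_upwards [hFsub] with y hy
    rw [← hy]
end

section
/- If F : (a,b) → ℝ is differentiable at every point of the open interval (a,b), then for every α > 0, F is an indefinite MC^α integral of its derivative F′ on (a,b). -/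
open Filter Set Topology MeasureTheory

/-- An everywhere differentiable function is an indefinite `MC^α` integral of its derivative. -/
theorem stmt_8 (a b : ℝ) (F : ℝ → ℝ)
    (hF : ∀ x ∈ Set.Ioo a b, DifferentiableAt ℝ F x)
    (α : ℝ) (hα : 0 < α) :
    IsMCIntegral α (Set.Ioo a b) F (deriv F) := by
  refine ⟨id, strictMonoOn_id, fun x hx => ?_⟩
  have h := (hF x hx).hasDerivAt
  have h2 : Tendsto (slope F x) (𝓝[≠] x) (𝓝 (deriv F x)) :=
    hasDerivAt_iff_tendsto_slope.mp h
  have h3 : Tendsto (fun y => (slope F x y - deriv F x) / α) (𝓝[≠] x) (𝓝 0) := by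
    have := (h2.sub_const (deriv F x)).div_const α
    simpa using this
  have h4 : Tendsto (fun y => (slope F x y - deriv F x) / α)
      (𝓝[Set.Ioo a b \ {x}] x) (𝓝 0) :=
    h3.mono_left (nhdsWithin_mono _ (fun y hy => hy.2))
  refine h4.congr' ?_
  filter_upwards [self_mem_nhdsWithin] with y hy
  have hyx : y - x ≠ 0 := sub_ne_zero.mpr hy.2
  simp only [slope_def_field, div_sub_div_same, id]
  field_simp
  ring
end

section
/- For every nondegenerate interval J ⊆ ℝ and every ε, τ with 0 < ε < 1 and 0 < τ < 1, there exists a Lebesgue measurable function f : ℝ → [0,∞) such that: (1) ∫_{−∞}^{∞} f(x) dx ≤ ε; and (2) there exist finitely many closed intervals [a₁,b₁], …, [aₙ,bₙ] ⊆ J with aᵢ < bᵢ such that Σᵢ ∫_{aᵢ}^{bᵢ} f(x) dx > 1/ε and the intervals [aᵢ, aᵢ + τ(bᵢ − aᵢ)], i = 1, …, n, are mutually disjoint. -/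
open Filter Set Topology MeasureTheory

/-!
Put mass `ε` uniformly on a tiny interval `(m, d]` at the right end of `[c, d] ⊆ J`. Every
interval `[a, d]` with `a ≤ m` then carries the whole mass `ε`, so `n > 1/ε²` such intervals give
a sum of integrals `n ε > 1/ε`. Taking the left endpoints `d - (d - c) rᵏ` with `0 < r < 1 - τ`,
the lengths shrink by the factor `r`, so the initial `τ`-portion of `[aₖ, d]` ends before `aₖ₊₁`.
-/

noncomputable def plateau (m d h : ℝ) : ℝ → ℝ :=
  (Ioc m d).indicator fun _ => h / (d - m)

section Plateau

variable {m d h : ℝ}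

theorem measurable_plateau : Measurable (plateau m d h) :=
  measurable_const.indicator measurableSet_Ioc

theorem plateau_nonneg (hh : 0 ≤ h) (hmd : m ≤ d) (x : ℝ) : 0 ≤ plateau m d h x :=
  indicator_nonneg (fun _ _ => div_nonneg hh (sub_nonneg.2 hmd)) x

theorem integrable_plateau : Integrable (plateau m d h) :=
  (integrable_indicator_iff measurableSet_Ioc).2 <|
    integrableOn_const (by rw [Real.volume_Ioc]; exact ENNReal.ofReal_ne_top)

theorem integral_plateau (hmd : m < d) : ∫ x, plateau m d h x = h := by
  rw [plateau, integral_indicator_const _ measurableSet_Ioc, Real.volume_real_Ioc_of_le hmd.le,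
    smul_eq_mul, mul_div_cancel₀ _ (sub_ne_zero.2 hmd.ne')]

theorem intervalIntegral_plateau {a b : ℝ} (ha : a ≤ m) (hmd : m < d) (hb : d ≤ b) :
    ∫ x in a..b, plateau m d h x = h := by
  rw [intervalIntegral.integral_of_le (ha.trans (hmd.le.trans hb)),
    setIntegral_eq_integral_of_forall_compl_eq_zero fun x hx => ?_, integral_plateau hmd]
  exact indicator_of_notMem (fun hx' => hx (Ioc_subset_Ioc ha hb hx')) _

end Plateau

theorem Icc_disjoint_Icc_of_lt {a b c d : ℝ} (h : b < c) : Disjoint (Icc a b) (Icc c d) :=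
  (Iic_disjoint_Ici.2 h.not_ge).mono Icc_subset_Iic_self Icc_subset_Ici_self

section GeometricPoints

variable {c d r : ℝ}

theorem le_sub_mul_pow (hcd : c ≤ d) (hr0 : 0 ≤ r) (hr1 : r ≤ 1) (k : ℕ) :
    c ≤ d - (d - c) * r ^ k := by
  nlinarith [pow_le_one₀ (n := k) hr0 hr1]

theorem sub_mul_pow_le_sub_mul_pow (hcd : c ≤ d) (hr0 : 0 ≤ r) (hr1 : r ≤ 1) {i j : ℕ}
    (hij : i ≤ j) : d - (d - c) * r ^ i ≤ d - (d - c) * r ^ j := by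
  gcongr d - (d - c) * ?_
  exact pow_le_pow_of_le_one hr0 hr1 hij

-- `d - (d - L * r ^ i)` is left unsimplified: it is `b - a` for `[a, b] = [d - L * r ^ i, d]`.
theorem sub_mul_pow_add_mul_lt {L τ : ℝ} (hL : 0 < L) (hτ : 0 ≤ τ) (hr0 : 0 < r)
    (hrτ : r < 1 - τ) {i j : ℕ} (hij : i < j) :
    d - L * r ^ i + τ * (d - (d - L * r ^ i)) < d - L * r ^ j := by
  have hr1 : r ≤ 1 := by linarith
  have hpow : r ^ j ≤ r ^ i * r := pow_succ r i ▸ pow_le_pow_of_le_one hr0.le hr1 hij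
  have hshrink : L * (r ^ i * r) < L * (r ^ i * (1 - τ)) := by gcongr
  nlinarith

end GeometricPoints

theorem stmt_9_general (J : Set ℝ) (hJ : J.OrdConnected) (c d : ℝ) (hc : c ∈ J) (hd : d ∈ J)
    (hcd : c < d) (ε τ : ℝ) (hε : 0 < ε) (hτ : 0 < τ) (hτ1 : τ < 1) :
    ∃ f : ℝ → ℝ, Measurable f ∧ (∀ x, 0 ≤ f x) ∧ MeasureTheory.Integrable f ∧
      (∫ x, f x) ≤ ε ∧
      ∃ n : ℕ, ∃ a b : Fin n → ℝ,
        (∀ i, a i < b i ∧ Set.Icc (a i) (b i) ⊆ J) ∧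
        (1 / ε < ∑ i, ∫ x in (a i)..(b i), f x) ∧
        Pairwise fun i j =>
          Disjoint (Set.Icc (a i) (a i + τ * (b i - a i)))
            (Set.Icc (a j) (a j + τ * (b j - a j))) := by
  obtain ⟨r, hr0, hrτ⟩ := exists_between (sub_pos.2 hτ1)
  have hr1 : r ≤ 1 := by linarith
  obtain ⟨n, hn⟩ := exists_nat_gt (1 / ε / ε)
  set a : Fin n → ℝ := fun i => d - (d - c) * r ^ (i : ℕ)
  set m := d - (d - c) * r ^ n
  have hmd : m < d := sub_lt_self d (mul_pos (sub_pos.2 hcd) (pow_pos hr0 n))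
  have ham (i : Fin n) : a i ≤ m := sub_mul_pow_le_sub_mul_pow hcd.le hr0.le hr1 i.2.le
  have haJ (i : Fin n) : a i ∈ J :=
    hJ.out hc hd ⟨le_sub_mul_pow hcd.le hr0.le hr1 i, (ham i).trans hmd.le⟩
  refine ⟨plateau m d ε, measurable_plateau, plateau_nonneg hε.le hmd.le, integrable_plateau,
    (integral_plateau hmd).le, n, a, fun _ => d,
    fun i => ⟨(ham i).trans_lt hmd, hJ.out (haJ i) hd⟩, ?_, ?_⟩
  · rw [Finset.sum_congr rfl fun i _ => intervalIntegral_plateau (ham i) hmd le_rfl,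
      Finset.sum_const, Finset.card_univ, Fintype.card_fin, nsmul_eq_mul]
    exact (div_lt_iff₀ hε).1 hn
  · exact (pairwise_disjoint_on _).2 fun i j hij => Icc_disjoint_Icc_of_lt <|
      sub_mul_pow_add_mul_lt (sub_pos.2 hcd) hτ.le hr0 hrτ hij

/-- The basic building block: a small nonnegative function concentrating a large
sum of integrals over intervals whose initial `τ`-portions are mutually disjoint. -/
theorem stmt_9 (J : Set ℝ) (hJ : J.OrdConnected) (c d : ℝ) (hc : c ∈ J) (hd : d ∈ J)
    (hcd : c < d) (ε τ : ℝ) (hε : 0 < ε) (hε1 : ε < 1) (hτ : 0 < τ) (hτ1 : τ < 1) :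
    ∃ f : ℝ → ℝ, Measurable f ∧ (∀ x, 0 ≤ f x) ∧ MeasureTheory.Integrable f ∧
      (∫ x, f x) ≤ ε ∧
      ∃ n : ℕ, ∃ a b : Fin n → ℝ,
        (∀ i, a i < b i ∧ Set.Icc (a i) (b i) ⊆ J) ∧
        (1 / ε < ∑ i, ∫ x in (a i)..(b i), f x) ∧
        Pairwise fun i j =>
          Disjoint (Set.Icc (a i) (a i + τ * (b i - a i)))
            (Set.Icc (a j) (a j + τ * (b j - a j))) :=
  stmt_9_general J hJ c d hc hd hcd ε τ hε hτ hτ1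
end

section
/- Let I ⊆ ℝ be an open interval and F, f : I → ℝ. Then F is an indefinite MC^1 integral of f on I if and only if F is an indefinite Perron integral of f on I. -/
open Filter Set Topology MeasureTheory

/-- `F` is an indefinite Perron integral of `f` on `I`: for every `ε > 0` and every
compact interval `Icc c d ⊆ I` there are a majorant `U` and a minorant `V` (in the sense
of Dini derivates, with values in the extended reals) that are `ε`-close to `F` on `Icc c d`. -/
def IsPerronIntegral (I : Set ℝ) (F f : ℝ → ℝ) : Prop :=
  ∀ ε > (0 : ℝ), ∀ c d : ℝ, Set.Icc c d ⊆ I →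
    ∃ U V : ℝ → ℝ,
      (∀ x ∈ I, (f x : EReal) ≤
        Filter.liminf (fun y => (((U y - U x) / (y - x) : ℝ) : EReal)) (𝓝[I \ {x}] x)) ∧
      (∀ x ∈ I,
        Filter.limsup (fun y => (((V y - V x) / (y - x) : ℝ) : EReal)) (𝓝[I \ {x}] x)
          ≤ (f x : EReal)) ∧
      ∀ x ∈ Set.Icc c d, |U x - F x| + |V x - F x| < ε

/-!
A majorant minus a minorant has nonnegative lower Dini derivate, hence is nondecreasing.

If `φ` controls `(F, f)`, then `F + η φ` and `F - η φ` are a majorant and a minorant, uniformly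
close to `F` on a compact interval once `η` is small.

Conversely, take Perron pairs `(Uᵢ, Vᵢ)` on all rational intervals `Jᵢ ⊆ I`, `i = (Jᵢ, k)`, with
tolerance `wᵢ / 2ᵏ` where `∑ wᵢ < ∞`. Truncating `Uᵢ - Vᵢ` to `[-wᵢ / 2ᵏ, wᵢ / 2ᵏ]` gives a
nondecreasing `σᵢ` equal to `Uᵢ - Vᵢ` on `Jᵢ`; put `φ = id + ∑ᵢ 2ᵏ σᵢ`. Near every point the
slopes of `Uᵢ` and `Vᵢ` then differ by at most `2⁻ᵏ` times the slope of `φ`. For `y` near `x`,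
monotonicity squeezes the slopes of a pair that is `δ |y - x|`-close to `F` at `x` and `y`
between those of `Uᵢ` and `Vᵢ`, which pins the slope of `F` to `f x` up to `5 δ` times the
slope of `φ`.
-/

section Slope

variable {k E : Type*} [Field k] [AddCommGroup E] [Module k E]

theorem slope_add (f g : k → E) (a b : k) : slope (f + g) a b = slope f a b + slope g a b := by
  simp only [slope_def_module, Pi.add_apply, add_sub_add_comm, smul_add]

theorem slope_sub (f g : k → E) (a b : k) : slope (f - g) a b = slope f a b - slope g a b := by
  simp only [slope_def_module, Pi.sub_apply, sub_sub_sub_comm, smul_sub]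

theorem slope_smul (c : k) (f : k → E) (a b : k) : slope (c • f) a b = c • slope f a b := by
  simp only [slope_def_module, Pi.smul_apply, ← smul_sub, smul_comm c]

end Slope

theorem div_sub_mul_eq_slope (F φ : ℝ → ℝ) (c x y : ℝ) :
    (F y - F x - c * (y - x)) / (φ y - φ x) = (slope F x y - c) / slope φ x y := by
  rcases eq_or_ne y x with rfl | hyx
  · simp
  rw [slope_def_field, slope_def_field, div_sub' (sub_ne_zero.2 hyx),
    div_div_div_cancel_right₀ (sub_ne_zero.2 hyx), mul_comm]

theorem abs_slope_lt_of_abs_lt {g : ℝ → ℝ} {x y a : ℝ} (hxy : x ≠ y)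
    (hx : |g x| < a * |y - x|) (hy : |g y| < a * |y - x|) : |slope g x y| < 2 * a := by
  have hs : 0 < |y - x| := abs_pos.2 (sub_ne_zero.2 hxy.symm)
  rw [slope_def_field, abs_div, div_lt_iff₀ hs]
  linarith [abs_sub (g y) (g x)]

theorem monotoneOn_of_eventually_slope_pos {I : Set ℝ} (hI : I.OrdConnected) {g : ℝ → ℝ}
    (hg : ∀ x ∈ I, ∀ᶠ y in 𝓝[I \ {x}] x, 0 < slope g x y) : MonotoneOn g I := by
  intro a ha b hb hab
  set A := {t ∈ Icc a b | g a ≤ g t}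
  have haA : a ∈ A := ⟨left_mem_Icc.2 hab, le_rfl⟩
  have hbdd : BddAbove A := ⟨b, fun t ht => ht.1.2⟩
  set s := sSup A
  have hs : s ∈ Icc a b := ⟨le_csSup hbdd haA, csSup_le ⟨a, haA⟩ fun t ht => ht.1.2⟩
  obtain ⟨ρ, hρ, hslope⟩ : ∃ ρ > 0, ∀ y ∈ I, y ≠ s → |y - s| < ρ → 0 < slope g s y := by
    obtain ⟨ρ, hρ, h⟩ := Metric.eventually_nhds_iff.1
      (eventually_nhdsWithin_iff.1 (hg s (hI.out ha hb hs)))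
    exact ⟨ρ, hρ, fun y hy hys hyρ => h (by rwa [Real.dist_eq]) ⟨hy, hys⟩⟩
  have hsA : s ∈ A := by
    by_contra hsA
    obtain ⟨t, htA, hst⟩ := exists_lt_of_lt_csSup ⟨a, haA⟩ (sub_lt_self s hρ)
    have hts : t < s := (le_csSup hbdd htA).lt_of_ne (by rintro rfl; exact hsA htA)
    have hgts : g t < g s := by
      have := hslope t (hI.out ha hb htA.1) hts.ne
        (by rw [abs_sub_lt_iff]; constructor <;> linarith)
      rwa [slope_comm, slope_pos_iff_of_le hts.le] at this
    exact hsA ⟨hs, htA.2.trans hgts.le⟩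
  suffices s = b from this ▸ hsA.2
  by_contra hsb
  set y := min b (s + ρ / 2)
  have hsy : s < y := lt_min (hs.2.lt_of_ne hsb) (by linarith)
  have hyA : y ∈ A := by
    have hyI : y ∈ Icc a b := ⟨hs.1.trans hsy.le, min_le_left _ _⟩
    have := hslope y (hI.out ha hb hyI) hsy.ne'
      (by rw [abs_sub_lt_iff]; constructor <;> linarith [min_le_right b (s + ρ / 2)])
    rw [slope_pos_iff_of_le hsy.le] at this
    exact ⟨hyI, hsA.2.trans this.le⟩
  exact (le_csSup hbdd hyA).not_gt hsy

theorem monotoneOn_of_eventually_neg_lt_slope {I : Set ℝ} (hI : I.OrdConnected) {g : ℝ → ℝ}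
    (hg : ∀ x ∈ I, ∀ ε > 0, ∀ᶠ y in 𝓝[I \ {x}] x, -ε < slope g x y) : MonotoneOn g I := by
  intro a ha b hb hab
  refine le_of_forall_pos_le_add fun ε hε => ?_
  set η := ε / (b - a + 1)
  have hη : 0 < η := div_pos hε (by linarith)
  have hmono : MonotoneOn (fun t => g t + η * t) I :=
    monotoneOn_of_eventually_slope_pos hI fun x hx => by
      filter_upwards [hg x hx η hη, self_mem_nhdsWithin] with y hy ⟨_, hyx⟩
      have hyx : y - x ≠ 0 := sub_ne_zero.2 hyx
      rw [slope_def_field] at hy ⊢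
      rw [show g y + η * y - (g x + η * x) = (g y - g x) + η * (y - x) by ring, add_div,
        mul_div_cancel_right₀ _ hyx]
      linarith
  have hηba : η * (b - a) ≤ ε := by
    rw [div_mul_eq_mul_div, div_le_iff₀ (by linarith)]
    nlinarith
  linarith [hmono ha hb hab]

theorem one_le_slope_of_monotoneOn_sub {φ : ℝ → ℝ} {I : Set ℝ}
    (hφ : MonotoneOn (fun t => φ t - t) I) {x y : ℝ} (hx : x ∈ I) (hy : y ∈ I) (hxy : x ≠ y) :
    1 ≤ slope φ x y := by
  have h := hφ.slope_nonneg hx hy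
  rwa [slope_def_field, show φ y - y - (φ x - x) = (φ y - φ x) - (y - x) by ring, sub_div,
    div_self (sub_ne_zero.2 hxy.symm), ← slope_def_field, sub_nonneg] at h

theorem MonotoneOn.exists_monotoneOn_abs_le_eqOn {g : ℝ → ℝ} {I J : Set ℝ} {ε : ℝ}
    (hg : MonotoneOn g I) (hε : 0 ≤ ε) (hJ : ∀ t ∈ J, |g t| ≤ ε) :
    ∃ σ : ℝ → ℝ, MonotoneOn σ I ∧ (∀ t, |σ t| ≤ ε) ∧ EqOn σ g J :=
  ⟨fun t => projIcc (-ε) ε (neg_le_self hε) (g t),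
    ((Subtype.mono_coe _).comp (monotone_projIcc _)).comp_monotoneOn hg,
    fun t => abs_le.2 (projIcc (-ε) ε (neg_le_self hε) (g t)).2,
    fun t ht => congrArg Subtype.val (projIcc_of_mem _ (abs_le.1 (hJ t ht)))⟩

theorem slope_le_slope_tsum {ι : Type*} {g : ι → ℝ → ℝ} {I : Set ℝ}
    (hg : ∀ i, MonotoneOn (g i) I) (hs : ∀ t, Summable fun i => g i t) {x y : ℝ}
    (hx : x ∈ I) (hy : y ∈ I) (i : ι) : slope (g i) x y ≤ slope (fun t => ∑' j, g j t) x y := by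
  have hsum : slope (fun t => ∑' j, g j t) x y = ∑' j, slope (g j) x y := by
    simp only [slope_def_field, ← (hs y).tsum_sub (hs x), tsum_div_const]
  have hsummable : Summable fun j => slope (g j) x y := by
    simpa only [slope_def_field] using ((hs y).sub (hs x)).div_const (y - x)
  exact hsum ▸ hsummable.le_tsum i fun j _ => (hg j).slope_nonneg hx hy

theorem exists_rat_mem_Ioo_Icc_subset {I : Set ℝ} {x : ℝ} (hI : I ∈ 𝓝 x) :
    ∃ q r : ℚ, x ∈ Ioo (q : ℝ) r ∧ Icc (q : ℝ) r ⊆ I := by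
  obtain ⟨l, u, ⟨hlx, hxu⟩, hsub⟩ := mem_nhds_iff_exists_Ioo_subset.1 hI
  obtain ⟨q, hlq, hqx⟩ := exists_rat_btwn hlx
  obtain ⟨r, hxr, hru⟩ := exists_rat_btwn hxu
  exact ⟨q, r, ⟨hqx, hxr⟩, (Icc_subset_Ioo hlq hru).trans hsub⟩

section Perron

variable {I : Set ℝ} {F f U V : ℝ → ℝ} {x : ℝ}

def IsPerronMajorant (I : Set ℝ) (f U : ℝ → ℝ) : Prop :=
  ∀ x ∈ I, (f x : EReal) ≤ liminf (fun y => (slope U x y : EReal)) (𝓝[I \ {x}] x)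

def IsPerronMinorant (I : Set ℝ) (f V : ℝ → ℝ) : Prop :=
  ∀ x ∈ I, limsup (fun y => (slope V x y : EReal)) (𝓝[I \ {x}] x) ≤ f x

theorem isPerronIntegral_iff :
    IsPerronIntegral I F f ↔ ∀ ε > (0 : ℝ), ∀ c d : ℝ, Icc c d ⊆ I →
      ∃ U V, IsPerronMajorant I f U ∧ IsPerronMinorant I f V ∧
        ∀ x ∈ Icc c d, |U x - F x| + |V x - F x| < ε := by
  simp only [IsPerronIntegral, IsPerronMajorant, IsPerronMinorant, slope_def_field]

theorem IsPerronMajorant.of_eventually (h : ∀ x ∈ I, ∀ᶠ y in 𝓝[I \ {x}] x, f x ≤ slope U x y) :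
    IsPerronMajorant I f U := fun x hx =>
  le_liminf_of_le (h := (h x hx).mono fun _ hy => EReal.coe_le_coe_iff.2 hy)

theorem IsPerronMinorant.of_eventually (h : ∀ x ∈ I, ∀ᶠ y in 𝓝[I \ {x}] x, slope V x y ≤ f x) :
    IsPerronMinorant I f V := fun x hx =>
  limsup_le_of_le (h := (h x hx).mono fun _ hy => EReal.coe_le_coe_iff.2 hy)

theorem IsPerronMajorant.eventually_lt_slope (hU : IsPerronMajorant I f U) (hx : x ∈ I) {c : ℝ}
    (hc : c < f x) : ∀ᶠ y in 𝓝[I \ {x}] x, c < slope U x y :=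
  (eventually_lt_of_lt_liminf ((EReal.coe_lt_coe_iff.2 hc).trans_le (hU x hx))).mono
    fun _ hy => EReal.coe_lt_coe_iff.1 hy

theorem IsPerronMinorant.eventually_slope_lt (hV : IsPerronMinorant I f V) (hx : x ∈ I) {c : ℝ}
    (hc : f x < c) : ∀ᶠ y in 𝓝[I \ {x}] x, slope V x y < c :=
  (eventually_lt_of_limsup_lt ((hV x hx).trans_lt (EReal.coe_lt_coe_iff.2 hc))).mono
    fun _ hy => EReal.coe_lt_coe_iff.1 hy

theorem IsPerronMajorant.monotoneOn_sub (hU : IsPerronMajorant I f U)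
    (hV : IsPerronMinorant I f V) (hI : I.OrdConnected) : MonotoneOn (U - V) I :=
  monotoneOn_of_eventually_neg_lt_slope hI fun x hx ε hε => by
    filter_upwards [hU.eventually_lt_slope hx (sub_lt_self (f x) (half_pos hε)),
      hV.eventually_slope_lt hx (lt_add_of_pos_right (f x) (half_pos hε))] with y hUy hVy
    rw [slope_sub]
    linarith

end Perron

section MCToPerron

variable {I : Set ℝ} {F f φ : ℝ → ℝ} {x η : ℝ}

theorem isControlFn_one_iff : IsControlFn 1 I F f φ ↔ StrictMonoOn φ I ∧
    ∀ x ∈ I, Tendsto (fun y => (slope F x y - f x) / slope φ x y) (𝓝[I \ {x}] x) (𝓝 0) := by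
  simp only [IsControlFn, one_mul, add_sub_cancel, div_sub_mul_eq_slope]

theorem IsControlFn.eventually_abs_slope_sub_le (hφ : IsControlFn 1 I F f φ) (hx : x ∈ I)
    (hη : 0 < η) : ∀ᶠ y in 𝓝[I \ {x}] x, |slope F x y - f x| ≤ η * slope φ x y := by
  obtain ⟨hmono, hlim⟩ := isControlFn_one_iff.1 hφ
  filter_upwards [hlim x hx (Metric.ball_mem_nhds 0 hη), self_mem_nhdsWithin]
    with y hy ⟨hyI, hyx⟩
  have hpos : 0 < slope φ x y := hmono.slope_pos hx hyI (Ne.symm hyx)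
  rw [Set.mem_preimage, mem_ball_zero_iff, Real.norm_eq_abs, abs_div, abs_of_pos hpos,
    div_lt_iff₀ hpos] at hy
  exact hy.le

theorem IsControlFn.isPerronMajorant_add (hφ : IsControlFn 1 I F f φ) (hη : 0 < η) :
    IsPerronMajorant I f (F + η • φ) :=
  .of_eventually fun x hx => (hφ.eventually_abs_slope_sub_le hx hη).mono fun y hy => by
    rw [slope_add, slope_smul, smul_eq_mul]
    linarith [neg_abs_le (slope F x y - f x)]

theorem IsControlFn.isPerronMinorant_sub (hφ : IsControlFn 1 I F f φ) (hη : 0 < η) :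
    IsPerronMinorant I f (F - η • φ) :=
  .of_eventually fun x hx => (hφ.eventually_abs_slope_sub_le hx hη).mono fun y hy => by
    rw [slope_sub, slope_smul, smul_eq_mul]
    linarith [le_abs_self (slope F x y - f x)]

theorem IsMCIntegral.isPerronIntegral (h : IsMCIntegral 1 I F f) : IsPerronIntegral I F f := by
  obtain ⟨φ, hφ⟩ := h
  refine isPerronIntegral_iff.2 fun ε hε c d hcd => ?_
  set M := max |φ c| |φ d|
  set η := ε / (2 * (M + 1))
  have hM : 0 ≤ M := (abs_nonneg _).trans (le_max_left _ _)
  have hη : 0 < η := by positivity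
  refine ⟨F + η • φ, F - η • φ, hφ.isPerronMajorant_add hη, hφ.isPerronMinorant_sub hη,
    fun t ht => ?_⟩
  have hφt : |φ t| ≤ M :=
    abs_le_max_abs_abs (hφ.1.monotoneOn (hcd ⟨le_rfl, ht.1.trans ht.2⟩) (hcd ht) ht.1)
      (hφ.1.monotoneOn (hcd ht) (hcd ⟨ht.1.trans ht.2, le_rfl⟩) ht.2)
  calc |(F + η • φ) t - F t| + |(F - η • φ) t - F t| = 2 * η * |φ t| := by
        simp only [Pi.add_apply, Pi.sub_apply, Pi.smul_apply, smul_eq_mul, add_sub_cancel_left,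
          sub_sub_cancel_left, abs_neg, abs_mul, abs_of_pos hη]
        ring
    _ ≤ 2 * η * M := by gcongr
    _ < ε := by
        rw [show 2 * η * M = ε * (M / (M + 1)) by simp only [η]; field_simp]
        exact mul_lt_of_lt_one_right hε ((div_lt_one (by positivity)).2 (lt_add_one M))

end MCToPerron

section PerronToMC

variable {I : Set ℝ} {F f φ : ℝ → ℝ}

def ControlsPerronOscillation (I : Set ℝ) (f φ : ℝ → ℝ) : Prop :=
  ∀ x ∈ I, ∀ δ > 0, ∃ U V, IsPerronMajorant I f U ∧ IsPerronMinorant I f V ∧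
    ∀ᶠ y in 𝓝 x, |slope (U - V) x y| ≤ δ * slope φ x y

theorem IsPerronIntegral.exists_pair_eqOn_bounded_monotoneOn (hP : IsPerronIntegral I F f)
    (hI : I.OrdConnected) {c d ε : ℝ} (hcd : Icc c d ⊆ I) (hε : 0 < ε) :
    ∃ U V, IsPerronMajorant I f U ∧ IsPerronMinorant I f V ∧
      ∃ σ : ℝ → ℝ, MonotoneOn σ I ∧ (∀ t, |σ t| ≤ ε) ∧ EqOn σ (U - V) (Icc c d) := by
  obtain ⟨U, V, hU, hV, hclose⟩ := isPerronIntegral_iff.1 hP ε hε c d hcd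
  refine ⟨U, V, hU, hV, (hU.monotoneOn_sub hV hI).exists_monotoneOn_abs_le_eqOn hε.le
    fun t ht => ?_⟩
  calc |(U - V) t| = |(U t - F t) - (V t - F t)| := by
        rw [Pi.sub_apply, sub_sub_sub_cancel_right]
    _ ≤ |U t - F t| + |V t - F t| := abs_sub _ _
    _ ≤ ε := (hclose t ht).le

theorem IsPerronIntegral.exists_controlsPerronOscillation (hP : IsPerronIntegral I F f)
    (hIo : IsOpen I) (hI : I.OrdConnected) :
    ∃ φ : ℝ → ℝ, MonotoneOn (fun t => φ t - t) I ∧ ControlsPerronOscillation I f φ := by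
  let ι := {J : ℚ × ℚ // Icc (J.1 : ℝ) J.2 ⊆ I} × ℕ
  have := Encodable.ofCountable ι
  obtain ⟨w, hw, C, hwC, -⟩ := posSumOfEncodable one_pos ι
  have hpair (i : ι) := hP.exists_pair_eqOn_bounded_monotoneOn hI i.1.2
    (by have := hw i; positivity : 0 < w i / 2 ^ i.2)
  choose U V hU hV σ hσ hσw hσUV using hpair
  let g : ι → ℝ → ℝ := fun i => (2 : ℝ) ^ i.2 • σ i
  have hg : ∀ i, MonotoneOn (g i) I := fun i _ ha _ hb hab =>
    mul_le_mul_of_nonneg_left (hσ i ha hb hab) (by positivity)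
  have hgs : ∀ t, Summable fun i => g i t := fun t =>
    hwC.summable.of_norm_bounded fun i => by
      rw [Real.norm_eq_abs, show g i t = 2 ^ i.2 * σ i t from rfl, abs_mul,
        abs_of_pos (by positivity), ← le_div_iff₀' (by positivity)]
      exact hσw i t
  refine ⟨fun t => t + ∑' j, g j t, ?_, fun x hx δ hδ => ?_⟩
  · simp only [add_sub_cancel_left]
    exact fun a ha b hb hab => (hgs a).tsum_le_tsum (fun i => hg i ha hb hab) (hgs b)
  obtain ⟨q, r, hxqr, hqr⟩ := exists_rat_mem_Ioo_Icc_subset (hIo.mem_nhds hx)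
  obtain ⟨k, hk⟩ := exists_pow_lt_of_lt_one hδ one_half_lt_one
  let i : ι := (⟨(q, r), hqr⟩, k)
  refine ⟨U i, V i, hU i, hV i, ?_⟩
  filter_upwards [Ioo_mem_nhds hxqr.1 hxqr.2] with y hy
  have hUV : slope (U i - V i) x y = slope (σ i) x y := by
    rw [slope_def_field, slope_def_field, hσUV i (Ioo_subset_Icc_self hxqr),
      hσUV i (Ioo_subset_Icc_self hy)]
  have hyI : y ∈ I := hqr (Ioo_subset_Icc_self hy)
  have hσ0 : 0 ≤ slope (σ i) x y := (hσ i).slope_nonneg hx hyI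
  have hσφ : 2 ^ k * slope (σ i) x y ≤ slope (fun t => t + ∑' j, g j t) x y := by
    rw [show (fun t => t + ∑' j, g j t) = id + fun t => ∑' j, g j t from rfl, slope_add]
    have := slope_le_slope_tsum hg hgs hx hyI i
    rw [slope_smul, smul_eq_mul] at this
    linarith [(monotone_id.monotoneOn I).slope_nonneg hx hyI]
  rw [hUV, abs_of_nonneg hσ0]
  calc slope (σ i) x y = (1 / 2) ^ k * (2 ^ k * slope (σ i) x y) := by
        rw [← mul_assoc, ← mul_pow]; norm_num
    _ ≤ δ * slope (fun t => t + ∑' j, g j t) x y := by gcongr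

theorem IsPerronIntegral.isControlFn (hP : IsPerronIntegral I F f) (hI : I.OrdConnected)
    (hφ : MonotoneOn (fun t => φ t - t) I) (hosc : ControlsPerronOscillation I f φ) :
    IsControlFn 1 I F f φ := by
  refine isControlFn_one_iff.2
    ⟨fun a ha b hb hab => by linarith [hφ ha hb hab.le], fun x hx => ?_⟩
  rw [Metric.tendsto_nhds]
  intro ε hε
  obtain ⟨δ, hδ, rfl⟩ : ∃ δ > 0, ε = 5 * δ := ⟨ε / 5, by positivity, by ring⟩
  obtain ⟨U, V, hU, hV, hUV⟩ := hosc x hx δ hδ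
  filter_upwards [self_mem_nhdsWithin, hU.eventually_lt_slope hx (sub_lt_self (f x) hδ),
    hV.eventually_slope_lt hx (lt_add_of_pos_right (f x) hδ), nhdsWithin_le_nhds hUV]
    with y ⟨hy, hyx⟩ hUy hVy hUVy
  have hxy : x ≠ y := Ne.symm hyx
  have hφ1 : 1 ≤ slope φ x y := one_le_slope_of_monotoneOn_sub hφ hx hy hxy
  obtain ⟨U', V', hU', hV', hclose⟩ := isPerronIntegral_iff.1 hP (δ * |y - x|)
    (mul_pos hδ (abs_pos.2 (sub_ne_zero.2 hyx))) _ _ (hI.uIcc_subset hx hy)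
  have hU'F : |slope (U' - F) x y| < 2 * δ := abs_slope_lt_of_abs_lt hxy
    ((le_add_of_nonneg_right (abs_nonneg _)).trans_lt (hclose x left_mem_uIcc))
    ((le_add_of_nonneg_right (abs_nonneg _)).trans_lt (hclose y right_mem_uIcc))
  have hV'F : |slope (V' - F) x y| < 2 * δ := abs_slope_lt_of_abs_lt hxy
    ((le_add_of_nonneg_left (abs_nonneg _)).trans_lt (hclose x left_mem_uIcc))
    ((le_add_of_nonneg_left (abs_nonneg _)).trans_lt (hclose y right_mem_uIcc))
  have hUV' := (hU.monotoneOn_sub hV' hI).slope_nonneg hx hy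
  have hU'V := (hU'.monotoneOn_sub hV hI).slope_nonneg hx hy
  rw [slope_sub] at hUVy hU'F hV'F hUV' hU'V
  have hδφ : δ ≤ δ * slope φ x y := le_mul_of_one_le_right hδ.le hφ1
  have hF : |slope F x y - f x| < 5 * δ * slope φ x y := by
    rw [abs_lt]
    constructor <;> linarith [abs_lt.1 hU'F, abs_lt.1 hV'F, abs_le.1 hUVy]
  have hφ0 : 0 < slope φ x y := zero_lt_one.trans_le hφ1
  rwa [dist_zero_right, Real.norm_eq_abs, abs_div, abs_of_pos hφ0, div_lt_iff₀ hφ0]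

theorem IsPerronIntegral.isMCIntegral (hP : IsPerronIntegral I F f) (hIo : IsOpen I)
    (hI : I.OrdConnected) : IsMCIntegral 1 I F f :=
  let ⟨φ, hφ, hosc⟩ := hP.exists_controlsPerronOscillation hIo hI
  ⟨φ, hP.isControlFn hI hφ hosc⟩

end PerronToMC

/-- Bendová–Malý: the `MC^1` integral coincides with the Perron integral. -/
theorem stmt_13 (I : Set ℝ) (hIopen : IsOpen I) (hIconn : I.OrdConnected)
    (F f : ℝ → ℝ) :
    IsMCIntegral 1 I F f ↔ IsPerronIntegral I F f :=
  ⟨IsMCIntegral.isPerronIntegral, fun hP => hP.isMCIntegral hIopen hIconn⟩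
end
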